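/- arXiv:2604.01208 — 8 statements merged into one kernel-verified Lean document; each statement's English description precedes it below -/
import Mathlib

section
/- Let x and y be clusters appearing in (possibly different) cluster decompositions of the same multiset z of points in a metric space. Then either x and y are disjoint (as sub-multisets of z), or one contains the other. -/
/-- A clustering rule: sequences of positive reals `0 < r 1 < r 2 < ...` and
`0 = d 1 < d 2 < ...` with `r k > d k + r (k-1)` and `d k > 6 * r (k-1)` for `k ≥ 2`. -/
def ClusteringRule (r d : ℕ → ℝ) : Prop :=
  0 < r 1 ∧ d 1 = 0 ∧
  (∀ k, 1 ≤ k → r k < r (k + 1)) ∧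
  (∀ k, 1 ≤ k → d k < d (k + 1)) ∧
  (∀ k, 2 ≤ k → d k + r (k - 1) < r k) ∧
  (∀ k, 2 ≤ k → 6 * r (k - 1) < d k)

/-!
Suppose `x` (from one decomposition) and `y` (from the other) share a point `p` and
`|x| ≤ |y|`. Every point `q` of `x` lies within `2 r_|x| ≤ 2 r_|y|` of `p`, whereas points of
distinct clusters of a decomposition are more than `2 (r_|y| + r_|y'|)` apart, because
`d_(a+b) > 6 r_(a+b-1) ≥ 3 (r_a + r_b)`. So `q` lies in no cluster other than `y` of the second
decomposition, and all of its multiplicity in `z` (which bounds that in `x`) is carried by `y`.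
Hence `x ≤ y`.
-/

namespace ClusteringRule

variable {r d : ℕ → ℝ}

theorem r_le_r (hrule : ClusteringRule r d) {a b : ℕ} (ha : 1 ≤ a) (hab : a ≤ b) : r a ≤ r b :=
  monotoneOn_nat_Ici_of_le_succ (fun k hk => (hrule.2.2.1 k hk).le) ha (ha.trans hab) hab

theorem r_pos (hrule : ClusteringRule r d) {a : ℕ} (ha : 1 ≤ a) : 0 < r a :=
  hrule.1.trans_le (hrule.r_le_r le_rfl ha)

theorem three_mul_r_add_r_lt_d (hrule : ClusteringRule r d) {a b : ℕ} (ha : 1 ≤ a) (hb : 1 ≤ b) :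
    3 * (r a + r b) < d (a + b) := by
  have hra := hrule.r_le_r ha (show a ≤ a + b - 1 by omega)
  have hrb := hrule.r_le_r hb (show b ≤ a + b - 1 by omega)
  have hd := hrule.2.2.2.2.2 (a + b) (by omega)
  linarith

end ClusteringRule

theorem Multiset.count_sum_eq_count_of_forall_ne {ι α : Type*} [Fintype ι] [DecidableEq α]
    {f : ι → Multiset α} {i₀ : ι} {a : α} (h : ∀ i ≠ i₀, a ∉ f i) :
    (∑ i, f i).count a = (f i₀).count a := by
  rw [Multiset.count_sum', Finset.sum_eq_single_of_mem i₀ (Finset.mem_univ i₀)]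
  exact fun i _ hi => Multiset.count_eq_zero_of_notMem (h i hi)

section Decomposition

variable {M : Type*} [MetricSpace M] {r d : ℕ → ℝ} {ι : Type*}
  {Y : ι → Multiset M} {c : ι → M}

theorem dist_lt_two_mul_of_mem_of_mem {x : Multiset M} {c₀ : M} {ρ : ℝ}
    (hconf : ∀ p ∈ x, dist p c₀ < ρ) {p q : M} (hp : p ∈ x) (hq : q ∈ x) :
    dist p q < 2 * ρ := by
  have := dist_triangle_right p q c₀
  linarith [hconf p hp, hconf q hq]

theorem ClusteringRule.two_mul_r_add_r_lt_dist (hrule : ClusteringRule r d)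
    (hconf : ∀ j, ∀ p ∈ Y j, dist p (c j) < r (Y j).card)
    (hsep : ∀ i j, i ≠ j → d ((Y i).card + (Y j).card) < dist (c i) (c j))
    {i j : ι} (hij : i ≠ j) {p q : M} (hp : p ∈ Y i) (hq : q ∈ Y j) :
    2 * (r (Y i).card + r (Y j).card) < dist p q := by
  have hd := hrule.three_mul_r_add_r_lt_d (Multiset.card_pos_iff_exists_mem.2 ⟨p, hp⟩)
    (Multiset.card_pos_iff_exists_mem.2 ⟨q, hq⟩)
  have := dist_triangle4 (c i) p q (c j)
  linarith [hsep i j hij, hconf i p hp, hconf j q hq, dist_comm p (c i)]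

theorem ClusteringRule.le_of_mem_of_mem_of_card_le [Fintype ι] [DecidableEq M]
    (hrule : ClusteringRule r d)
    (hconf : ∀ j, ∀ p ∈ Y j, dist p (c j) < r (Y j).card)
    (hsep : ∀ i j, i ≠ j → d ((Y i).card + (Y j).card) < dist (c i) (c j))
    {x : Multiset M} {c₀ : M} (hxle : x ≤ ∑ j, Y j)
    (hxconf : ∀ p ∈ x, dist p c₀ < r x.card) {j₀ : ι}
    (hcard : x.card ≤ (Y j₀).card) {p : M} (hpx : p ∈ x) (hpY : p ∈ Y j₀) :
    x ≤ Y j₀ := by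
  have hr : r x.card ≤ r (Y j₀).card :=
    hrule.r_le_r (Multiset.card_pos_iff_exists_mem.2 ⟨p, hpx⟩) hcard
  have only_in_j₀ : ∀ q ∈ x, ∀ j ≠ j₀, q ∉ Y j := fun q hq j hj hqY => by
    have hfar := hrule.two_mul_r_add_r_lt_dist hconf hsep (Ne.symm hj) hpY hqY
    have hnear := dist_lt_two_mul_of_mem_of_mem hxconf hpx hq
    linarith [hrule.r_pos (Multiset.card_pos_iff_exists_mem.2 ⟨q, hqY⟩)]
  refine Multiset.le_iff_count.2 fun q => ?_
  by_cases hq : q ∈ x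
  · rw [← Multiset.count_sum_eq_count_of_forall_ne (only_in_j₀ q hq)]
    exact Multiset.count_le_of_le q hxle
  · simp only [Multiset.count_eq_zero_of_notMem hq, zero_le]

end Decomposition

theorem clusters_nested_or_disjoint_general {M : Type*} [MetricSpace M] [DecidableEq M]
    (r d : ℕ → ℝ) (hrule : ClusteringRule r d) (z : Multiset M)
    (m : ℕ) (X : Fin m → Multiset M) (cX : Fin m → M)
    (hXsum : (∑ i, X i) = z)
    (hXconf : ∀ i, ∀ p ∈ X i, dist p (cX i) < r (X i).card)
    (hXsep : ∀ i j, i ≠ j → d ((X i).card + (X j).card) < dist (cX i) (cX j))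
    (l : ℕ) (Y : Fin l → Multiset M) (cY : Fin l → M)
    (hYsum : (∑ j, Y j) = z)
    (hYconf : ∀ j, ∀ p ∈ Y j, dist p (cY j) < r (Y j).card)
    (hYsep : ∀ i j, i ≠ j → d ((Y i).card + (Y j).card) < dist (cY i) (cY j))
    (i₀ : Fin m) (j₀ : Fin l) :
    X i₀ ∩ Y j₀ = 0 ∨ X i₀ ≤ Y j₀ ∨ Y j₀ ≤ X i₀ := by
  rcases Multiset.empty_or_exists_mem (X i₀ ∩ Y j₀) with hdisj | ⟨p, hp⟩
  · exact Or.inl hdisj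
  obtain ⟨hpX, hpY⟩ := Multiset.mem_inter.1 hp
  have hXz : X i₀ ≤ z := hXsum ▸ Finset.single_le_sum (fun _ _ => Multiset.zero_le _)
    (Finset.mem_univ i₀)
  have hYz : Y j₀ ≤ z := hYsum ▸ Finset.single_le_sum (fun _ _ => Multiset.zero_le _)
    (Finset.mem_univ j₀)
  rcases le_total (X i₀).card (Y j₀).card with hcard | hcard
  · exact Or.inr <| Or.inl <| hrule.le_of_mem_of_mem_of_card_le hYconf hYsep
      (hYsum ▸ hXz) (hXconf i₀) hcard hpX hpY
  · exact Or.inr <| Or.inr <| hrule.le_of_mem_of_mem_of_card_le hXconf hXsep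
      (hXsum ▸ hYz) (hYconf j₀) hcard hpY hpX

/-- Two clusters appearing in (possibly different) cluster decompositions of the same
multiset `z` are either disjoint or nested. -/
theorem clusters_nested_or_disjoint {M : Type*} [MetricSpace M] [DecidableEq M]
    (r d : ℕ → ℝ) (hrule : ClusteringRule r d) (z : Multiset M)
    (m : ℕ) (X : Fin m → Multiset M) (cX : Fin m → M)
    (hXsum : (∑ i, X i) = z) (hXne : ∀ i, X i ≠ 0)
    (hXconf : ∀ i, ∀ p ∈ X i, dist p (cX i) < r (X i).card)
    (hXsep : ∀ i j, i ≠ j → d ((X i).card + (X j).card) < dist (cX i) (cX j))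
    (l : ℕ) (Y : Fin l → Multiset M) (cY : Fin l → M)
    (hYsum : (∑ j, Y j) = z) (hYne : ∀ j, Y j ≠ 0)
    (hYconf : ∀ j, ∀ p ∈ Y j, dist p (cY j) < r (Y j).card)
    (hYsep : ∀ i j, i ≠ j → d ((Y i).card + (Y j).card) < dist (cY i) (cY j))
    (i₀ : Fin m) (j₀ : Fin l) :
    X i₀ ∩ Y j₀ = 0 ∨ X i₀ ≤ Y j₀ ∨ Y j₀ ≤ X i₀ :=
  clusters_nested_or_disjoint_general r d hrule z m X cX hXsum hXconf hXsep l Y cY hYsum hYconf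
    hYsep i₀ j₀
end

section
/- Any two cluster decompositions of a given multiset z of points in a metric space admit a common refinement: if z = Σ_i x_i and z = Σ_j y_j are cluster decompositions, then z = Σ_{i,j} (x_i ∩ y_j) is a cluster decomposition. In particular, there exists a finest cluster decomposition of z. -/
open Function

namespace ClusteringRule

variable {r d : ℕ → ℝ}

lemma r_mono (h : ClusteringRule r d) {k n : ℕ} (hk : 0 < k) (hkn : k ≤ n) : r k ≤ r n :=
  monotoneOn_nat_Ici_of_le_succ (fun n hn => (h.2.2.1 n hn).le) hk (hk.trans_le hkn) hkn

lemma r_pos_s5 (h : ClusteringRule r d) {k : ℕ} (hk : 0 < k) : 0 < r k :=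
  h.1.trans_le (h.r_mono Nat.one_pos hk)

lemma d_lt_r (h : ClusteringRule r d) {k : ℕ} (hk : 2 ≤ k) : d k < r k := by
  linarith [h.2.2.2.2.1 k hk, h.r_pos_s5 (k := k - 1) (by omega)]

lemma six_mul_r_lt_d (h : ClusteringRule r d) {k n : ℕ} (hk : 0 < k) (hkn : k < n) :
    6 * r k < d n :=
  calc 6 * r k ≤ 6 * r (n - 1) := by gcongr; exact h.r_mono hk (by omega)
    _ < d n := h.2.2.2.2.2 n (by omega)

variable {M : Type*} [MetricSpace M]

lemma dist_le_d_of_common_point (h : ClusteringRule r d) {a b : ℕ} (ha : 0 < a) (hb : 0 < b)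
    {x u v : M} (hu : dist x u < r a) (hv : dist x v < r b) : dist u v ≤ d (a + b) := by
  have := dist_triangle_left u v x
  linarith [h.six_mul_r_lt_d ha (by omega : a < a + b), h.six_mul_r_lt_d hb (by omega : b < a + b),
    h.r_pos_s5 ha]

lemma dist_le_d_of_chain (h : ClusteringRule r d) {a b b' : ℕ} (ha : 0 < a) (hab : a ≤ b)
    (hb' : 0 < b') {x y u v w : M} (hxu : dist x u < r b) (hxv : dist x v < r a)
    (hyv : dist y v < r a) (hyw : dist y w < r b') : dist u w ≤ d (b + b') := by
  have := dist_triangle u v w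
  have := dist_triangle_left u v x
  have := dist_triangle_left v w y
  linarith [h.six_mul_r_lt_d ha (by omega : a < b + b'),
    h.six_mul_r_lt_d (ha.trans_le hab) (by omega : b < b + b'),
    h.six_mul_r_lt_d hb' (by omega : b' < b + b'), h.r_pos_s5 ha]

lemma d_lt_dist_of_dist_lt_add (h : ClusteringRule r d) {b a' b' : ℕ} (hb : 0 < b)
    (ha' : 0 < a') (hab' : a' < b') {u v w : M} (huw : d (b + b') < dist u w)
    (hvw : dist v w < r a' + r b') : d (b + a') < dist u v := by
  have := dist_triangle u v w
  linarith [h.d_lt_r (k := b + a') (by omega),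
    h.six_mul_r_lt_d (k := b + a') (n := b + b') (by omega) (by omega),
    h.six_mul_r_lt_d (k := a') (n := b + b') ha' (by omega),
    h.six_mul_r_lt_d (k := b') (n := b + b') (by omega) (by omega), h.r_pos_s5 ha']

end ClusteringRule

section

variable {α ι : Type*} [DecidableEq α] [Fintype ι] {s : Multiset α} {A : ι → Multiset α}

lemma Multiset.count_sum_of_pairwise_disjoint (hA : _root_.Pairwise (Disjoint on A)) {i : ι}
    {a : α} (ha : a ∈ A i) : count a (∑ j, A j) = count a (A i) := by
  rw [Multiset.count_sum']
  refine Finset.sum_eq_single i (fun j _ hji => Multiset.count_eq_zero.mpr ?_) (by simp)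
  exact Multiset.disjoint_left.mp (hA hji.symm) ha

lemma Multiset.sum_inter_of_pairwise_disjoint (hA : _root_.Pairwise (Disjoint on A))
    (hs : s ≤ ∑ j, A j) : ∑ j, s ∩ A j = s := by
  ext a
  rw [Multiset.count_sum']
  simp only [Multiset.count_inter]
  by_cases ha : ∃ i, a ∈ A i
  · obtain ⟨i, hi⟩ := ha
    rw [Finset.sum_eq_single i (fun j _ hji => by
      rw [Multiset.count_eq_zero.mpr (Multiset.disjoint_left.mp (hA hji.symm) hi), min_zero])
      (by simp)]
    exact min_eq_left ((count_sum_of_pairwise_disjoint hA hi) ▸ Multiset.le_iff_count.mp hs a)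
  · have has : a ∉ s := fun has => ha (by simpa using Multiset.mem_of_le hs has)
    simp [Multiset.count_eq_zero.mpr has]

end

section

variable {M : Type*} [MetricSpace M]

structure IsClusterDecomposition (r d : ℕ → ℝ) (z : Multiset M) {ι : Type*} [Fintype ι]
    (x : ι → Multiset M) (c : ι → M) : Prop where
  sum_eq : ∑ i, x i = z
  dist_lt : ∀ i, ∀ p ∈ x i, dist p (c i) < r (x i).card
  lt_dist : Pairwise fun i j => d ((x i).card + (x j).card) < dist (c i) (c j)

def refinementCenter [DecidableEq M] {ι κ : Type*} (x : ι → Multiset M) (y : κ → Multiset M)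
    (cx : ι → M) (cy : κ → M) (p : ι × κ) : M :=
  if y p.2 ≤ x p.1 then cy p.2 else cx p.1

namespace IsClusterDecomposition

variable {r d : ℕ → ℝ} {z : Multiset M} {ι κ : Type*} [Fintype ι] [Fintype κ]
  {x : ι → Multiset M} {cx : ι → M} {y : κ → Multiset M} {cy : κ → M}

lemma cluster_le (hx : IsClusterDecomposition r d z x cx) (i : ι) : x i ≤ z :=
  hx.sum_eq ▸ Finset.single_le_sum (fun _ _ => Multiset.zero_le _) (Finset.mem_univ i)

lemma eq_of_mem_of_mem (h : ClusteringRule r d) (hx : IsClusterDecomposition r d z x cx)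
    {i j : ι} {p : M} (hi : p ∈ x i) (hj : p ∈ x j) : i = j := by
  by_contra hij
  exact (h.dist_le_d_of_common_point (Multiset.card_pos_iff_exists_mem.mpr ⟨p, hi⟩)
    (Multiset.card_pos_iff_exists_mem.mpr ⟨p, hj⟩) (hx.dist_lt i p hi)
    (hx.dist_lt j p hj)).not_gt (hx.lt_dist hij)

lemma eq_of_le_of_le (h : ClusteringRule r d) (hx : IsClusterDecomposition r d z x cx)
    {s : Multiset M} (hs : s ≠ 0) {i j : ι} (hi : s ≤ x i) (hj : s ≤ x j) : i = j := by
  obtain ⟨p, hp⟩ := Multiset.exists_mem_of_ne_zero hs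
  exact hx.eq_of_mem_of_mem h (Multiset.mem_of_le hi hp) (Multiset.mem_of_le hj hp)

lemma pairwise_disjoint (h : ClusteringRule r d) (hx : IsClusterDecomposition r d z x cx) :
    Pairwise (Disjoint on x) := fun _ _ hij =>
  Multiset.disjoint_left.mpr fun hi hj => hij (hx.eq_of_mem_of_mem h hi hj)

lemma lt_dist_of_le_of_lt (h : ClusteringRule r d) (hx : IsClusterDecomposition r d z x cx)
    (hy : IsClusterDecomposition r d z y cy) {i i' : ι} {j j' : κ} (hyx : y j ≤ x i)
    (hy0 : y j ≠ 0) (hxy : x i' < y j') (hx0 : x i' ≠ 0) :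
    d ((y j).card + (x i').card) < dist (cy j) (cx i') := by
  have hjj' : j ≠ j' := by
    rintro rfl
    obtain rfl : i' = i := hx.eq_of_le_of_le h hx0 le_rfl (hxy.le.trans hyx)
    exact (hxy.trans_le hyx).false
  obtain ⟨q, hq⟩ := Multiset.exists_mem_of_ne_zero hx0
  exact h.d_lt_dist_of_dist_lt_add (Multiset.card_pos.mpr hy0) (Multiset.card_pos.mpr hx0)
    (Multiset.card_lt_card hxy) (hy.lt_dist hjj') ((dist_triangle_left _ _ q).trans_lt
      (add_lt_add (hx.dist_lt i' q hq) (hy.dist_lt j' q (Multiset.mem_of_le hxy.le hq))))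

variable [DecidableEq M]

lemma sum_sum_inter (h : ClusteringRule r d) (hx : IsClusterDecomposition r d z x cx)
    (hy : IsClusterDecomposition r d z y cy) : ∑ i, ∑ j, x i ∩ y j = z :=
  calc ∑ i, ∑ j, x i ∩ y j = ∑ i, x i := Finset.sum_congr rfl fun i _ =>
        Multiset.sum_inter_of_pairwise_disjoint (hy.pairwise_disjoint h)
          (hy.sum_eq ▸ hx.cluster_le i)
    _ = z := hx.sum_eq

lemma le_of_card_le (h : ClusteringRule r d) (hx : IsClusterDecomposition r d z x cx)
    (hy : IsClusterDecomposition r d z y cy) {i : ι} {j : κ} {p : M} (hpx : p ∈ x i)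
    (hpy : p ∈ y j) (hcard : (x i).card ≤ (y j).card) : x i ≤ y j := by
  have hsub : ∀ q ∈ x i, q ∈ y j := by
    intro q hq
    obtain ⟨j', -, hqy⟩ :=
      Multiset.mem_sum.mp (hy.sum_eq ▸ Multiset.mem_of_le (hx.cluster_le i) hq)
    by_contra hj
    have hjj' : j ≠ j' := by rintro rfl; exact hj hqy
    exact (h.dist_le_d_of_chain (Multiset.card_pos_iff_exists_mem.mpr ⟨p, hpx⟩) hcard
      (Multiset.card_pos_iff_exists_mem.mpr ⟨q, hqy⟩) (hy.dist_lt j p hpy) (hx.dist_lt i p hpx)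
      (hx.dist_lt i q hq) (hy.dist_lt j' q hqy)).not_gt (hy.lt_dist hjj')
  refine Multiset.le_iff_count.mpr fun q => ?_
  by_cases hq : q ∈ x i
  · calc (x i).count q ≤ z.count q := Multiset.le_iff_count.mp (hx.cluster_le i) q
      _ = (y j).count q := by
        rw [← hy.sum_eq]
        exact Multiset.count_sum_of_pairwise_disjoint (hy.pairwise_disjoint h) (hsub q hq)
  · simp [Multiset.count_eq_zero.mpr hq]

lemma le_or_le_of_inter_ne_zero (h : ClusteringRule r d) (hx : IsClusterDecomposition r d z x cx)
    (hy : IsClusterDecomposition r d z y cy) {i : ι} {j : κ} (hij : x i ∩ y j ≠ 0) :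
    x i ≤ y j ∨ y j ≤ x i := by
  obtain ⟨p, hp⟩ := Multiset.exists_mem_of_ne_zero hij
  rw [Multiset.mem_inter] at hp
  rcases le_total (x i).card (y j).card with hc | hc
  · exact .inl (hx.le_of_card_le h hy hp.1 hp.2 hc)
  · exact .inr (hy.le_of_card_le h hx hp.2 hp.1 hc)

lemma refinementCenter_cases (h : ClusteringRule r d) (hx : IsClusterDecomposition r d z x cx)
    (hy : IsClusterDecomposition r d z y cy) {p : ι × κ} (hp : x p.1 ∩ y p.2 ≠ 0) :
    (y p.2 ≤ x p.1 ∧ x p.1 ∩ y p.2 = y p.2 ∧ refinementCenter x y cx cy p = cy p.2) ∨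
      (x p.1 < y p.2 ∧ x p.1 ∩ y p.2 = x p.1 ∧ refinementCenter x y cx cy p = cx p.1) := by
  by_cases hyx : y p.2 ≤ x p.1
  · exact .inl ⟨hyx, inf_eq_right.mpr hyx, if_pos hyx⟩
  · have hxy : x p.1 < y p.2 :=
      ((hx.le_or_le_of_inter_ne_zero h hy hp).resolve_right hyx).lt_of_not_ge hyx
    exact .inr ⟨hxy, inf_eq_left.mpr hxy.le, if_neg hyx⟩

lemma dist_lt_refinementCenter (h : ClusteringRule r d) (hx : IsClusterDecomposition r d z x cx)
    (hy : IsClusterDecomposition r d z y cy) {p : ι × κ} (hp : x p.1 ∩ y p.2 ≠ 0) :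
    ∀ q ∈ x p.1 ∩ y p.2,
      dist q (refinementCenter x y cx cy p) < r (x p.1 ∩ y p.2).card := by
  rcases hx.refinementCenter_cases h hy hp with ⟨-, hp_eq, hc⟩ | ⟨-, hp_eq, hc⟩ <;>
    rw [hp_eq, hc]
  exacts [hy.dist_lt p.2, hx.dist_lt p.1]

lemma lt_dist_refinementCenter (h : ClusteringRule r d) (hx : IsClusterDecomposition r d z x cx)
    (hy : IsClusterDecomposition r d z y cy) {p q : ι × κ} (hpq : p ≠ q)
    (hp : x p.1 ∩ y p.2 ≠ 0) (hq : x q.1 ∩ y q.2 ≠ 0) :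
    d ((x p.1 ∩ y p.2).card + (x q.1 ∩ y q.2).card) <
      dist (refinementCenter x y cx cy p) (refinementCenter x y cx cy q) := by
  rcases hx.refinementCenter_cases h hy hp with ⟨hp', hp_eq, hcp⟩ | ⟨hp', hp_eq, hcp⟩ <;>
  rcases hx.refinementCenter_cases h hy hq with ⟨hq', hq_eq, hcq⟩ | ⟨hq', hq_eq, hcq⟩ <;>
  rw [hp_eq, hq_eq, hcp, hcq] <;> rw [hp_eq] at hp <;> rw [hq_eq] at hq
  · refine hy.lt_dist fun hj => hpq (Prod.ext ?_ hj)
    exact hx.eq_of_le_of_le h hp hp' (hj ▸ hq')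
  · exact hx.lt_dist_of_le_of_lt h hy hp' hp hq' hq
  · rw [add_comm, dist_comm]
    exact hx.lt_dist_of_le_of_lt h hy hq' hq hp' hp
  · refine hx.lt_dist fun hi => hpq (Prod.ext hi ?_)
    exact hy.eq_of_le_of_le h hp hp'.le (hi ▸ hq'.le)

end IsClusterDecomposition

end

theorem cluster_decompositions_common_refinement_general {M : Type*} [MetricSpace M] [DecidableEq M]
    (r d : ℕ → ℝ) (hrule : ClusteringRule r d) (z : Multiset M)
    (m : ℕ) (X : Fin m → Multiset M) (cX : Fin m → M)
    (hXsum : (∑ i, X i) = z)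
    (hXconf : ∀ i, ∀ p ∈ X i, dist p (cX i) < r (X i).card)
    (hXsep : ∀ i j, i ≠ j → d ((X i).card + (X j).card) < dist (cX i) (cX j))
    (l : ℕ) (Y : Fin l → Multiset M) (cY : Fin l → M)
    (hYsum : (∑ j, Y j) = z)
    (hYconf : ∀ j, ∀ p ∈ Y j, dist p (cY j) < r (Y j).card)
    (hYsep : ∀ i j, i ≠ j → d ((Y i).card + (Y j).card) < dist (cY i) (cY j)) :
    (∑ i, ∑ j, X i ∩ Y j) = z ∧
    ∃ c : Fin m × Fin l → M,
      (∀ p : Fin m × Fin l, X p.1 ∩ Y p.2 ≠ 0 →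
        ∀ x ∈ X p.1 ∩ Y p.2, dist x (c p) < r (X p.1 ∩ Y p.2).card) ∧
      (∀ p q : Fin m × Fin l, p ≠ q → X p.1 ∩ Y p.2 ≠ 0 → X q.1 ∩ Y q.2 ≠ 0 →
        d ((X p.1 ∩ Y p.2).card + (X q.1 ∩ Y q.2).card) < dist (c p) (c q)) := by
  have hX : IsClusterDecomposition r d z X cX := ⟨hXsum, hXconf, hXsep⟩
  have hY : IsClusterDecomposition r d z Y cY := ⟨hYsum, hYconf, hYsep⟩
  exact ⟨hX.sum_sum_inter hrule hY, refinementCenter X Y cX cY,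
    fun _ => hX.dist_lt_refinementCenter hrule hY,
    fun _ _ => hX.lt_dist_refinementCenter hrule hY⟩

/-- Common refinement: given two cluster decompositions `z = Σ X i = Σ Y j`, the pieces
`X i ∩ Y j` again form a cluster decomposition of `z` (with suitable centers for the
nonempty pieces). -/
theorem cluster_decompositions_common_refinement {M : Type*} [MetricSpace M] [DecidableEq M]
    (r d : ℕ → ℝ) (hrule : ClusteringRule r d) (z : Multiset M)
    (m : ℕ) (X : Fin m → Multiset M) (cX : Fin m → M)
    (hXsum : (∑ i, X i) = z) (hXne : ∀ i, X i ≠ 0)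
    (hXconf : ∀ i, ∀ p ∈ X i, dist p (cX i) < r (X i).card)
    (hXsep : ∀ i j, i ≠ j → d ((X i).card + (X j).card) < dist (cX i) (cX j))
    (l : ℕ) (Y : Fin l → Multiset M) (cY : Fin l → M)
    (hYsum : (∑ j, Y j) = z) (hYne : ∀ j, Y j ≠ 0)
    (hYconf : ∀ j, ∀ p ∈ Y j, dist p (cY j) < r (Y j).card)
    (hYsep : ∀ i j, i ≠ j → d ((Y i).card + (Y j).card) < dist (cY i) (cY j)) :
    (∑ i, ∑ j, X i ∩ Y j) = z ∧
    ∃ c : Fin m × Fin l → M,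
      (∀ p : Fin m × Fin l, X p.1 ∩ Y p.2 ≠ 0 →
        ∀ x ∈ X p.1 ∩ Y p.2, dist x (c p) < r (X p.1 ∩ Y p.2).card) ∧
      (∀ p q : Fin m × Fin l, p ≠ q → X p.1 ∩ Y p.2 ≠ 0 → X q.1 ∩ Y q.2 ≠ 0 →
        d ((X p.1 ∩ Y p.2).card + (X q.1 ∩ Y q.2).card) < dist (c p) (c q)) :=
  cluster_decompositions_common_refinement_general r d hrule z m X cX hXsum hXconf hXsep l Y cY
    hYsum hYconf hYsep
end

section
/- Every finite multiset z of points in a metric space (with sufficiently small diameter relative to the convexity radius) admits a cluster decomposition: there exist confined, pairwise separated sub-multisets z₁, ..., z_m with z = z₁ + ... + z_m. -/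
/-- The center of mass of a finite multiset of points in an inner product space. -/
noncomputable def centroid {V : Type*} [NormedAddCommGroup V] [InnerProductSpace ℝ V]
    (z : Multiset V) : V :=
  (z.card : ℝ)⁻¹ • z.sum

lemma ClusteringRule.monotoneOn_r {r d : ℕ → ℝ} (h : ClusteringRule r d) :
    MonotoneOn r {k | 1 ≤ k} :=
  monotoneOn_nat_Ici_of_le_succ fun k hk => (h.2.2.1 k hk).le

lemma Multiset.exists_pair_le_of_not_pairwise {α : Type*} {R : α → α → Prop}
    {s : Multiset α} (h : ¬ s.Pairwise R) : ∃ a b, a ::ₘ b ::ₘ 0 ≤ s ∧ ¬ R a b := by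
  induction s using Quotient.inductionOn with
  | h l =>
    have hl : ¬ l.Pairwise R := fun hl => h ⟨l, rfl, hl⟩
    simp only [List.pairwise_iff_forall_sublist, not_forall] at hl
    obtain ⟨a, b, hab, hR⟩ := hl
    exact ⟨a, b, Multiset.coe_le.mpr hab.subperm, hR⟩

lemma List.Pairwise.rel_getElem_of_ne {α : Type*} {R : α → α → Prop} [Std.Symm R]
    {l : List α} (hl : l.Pairwise R) {i j : ℕ} (hi : i < l.length) (hj : j < l.length)
    (hij : i ≠ j) : R l[i] l[j] := by
  rcases hij.lt_or_gt with hlt | hgt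
  · exact List.pairwise_iff_getElem.mp hl i j hi hj hlt
  · exact symm (List.pairwise_iff_getElem.mp hl j i hj hi hgt)

section Clusters

variable {V : Type*} [NormedAddCommGroup V] [InnerProductSpace ℝ V]

def Confined (r : ℕ → ℝ) (s : Multiset V) : Prop :=
  ∀ p ∈ s, dist p (centroid s) < r s.card

def Separated (d : ℕ → ℝ) (a b : Multiset V) : Prop :=
  d (a.card + b.card) < dist (centroid a) (centroid b)

instance (d : ℕ → ℝ) : Std.Symm (Separated (V := V) d) where
  symm a b h := by rwa [Separated, add_comm, dist_comm]

@[simp]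
lemma centroid_singleton (p : V) : centroid ({p} : Multiset V) = p := by
  simp [centroid]

lemma card_smul_centroid (s : Multiset V) : (s.card : ℝ) • centroid s = s.sum := by
  rcases eq_or_ne s 0 with rfl | hs
  · simp
  · rw [centroid, smul_smul, mul_inv_cancel₀ (by simpa using hs), one_smul]

lemma centroid_add_sub_centroid (a b : Multiset V) (ha : a ≠ 0) :
    centroid (a + b) - centroid a =
      ((b.card : ℝ) / (a.card + b.card)) • (centroid b - centroid a) := by
  have hk : (a.card : ℝ) + b.card ≠ 0 := by
    have : 0 < a.card := Multiset.card_pos.mpr ha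
    positivity
  rw [centroid, Multiset.card_add, Multiset.sum_add, ← card_smul_centroid a,
    ← card_smul_centroid b]
  push_cast
  match_scalars <;> field_simp
  ring

lemma dist_centroid_add_left_le (a b : Multiset V) (ha : a ≠ 0) :
    dist (centroid (a + b)) (centroid a) ≤ dist (centroid a) (centroid b) := by
  have hweight : (b.card : ℝ) / (a.card + b.card) ≤ 1 :=
    div_le_one_of_le₀ (le_add_of_nonneg_left a.card.cast_nonneg) (by positivity)
  rw [dist_eq_norm, centroid_add_sub_centroid a b ha, norm_smul, dist_comm, dist_eq_norm,
    Real.norm_of_nonneg (by positivity)]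
  exact mul_le_of_le_one_left (norm_nonneg _) hweight

lemma confined_singleton {r : ℕ → ℝ} (hr : 0 < r 1) (p : V) : Confined r {p} := by
  simpa [Confined] using hr

lemma Confined.dist_centroid_add_lt {r d : ℕ → ℝ} (hrule : ClusteringRule r d)
    {a b : Multiset V} (ha : a ≠ 0) (hb : b ≠ 0) (hca : Confined r a)
    (hab : ¬ Separated d a b) {p : V} (hp : p ∈ a) :
    dist p (centroid (a + b)) < r (a.card + b.card) := by
  have ha1 : 1 ≤ a.card := Multiset.card_pos.mpr ha
  have hb1 : 1 ≤ b.card := Multiset.card_pos.mpr hb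
  have hr : r a.card ≤ r (a.card + b.card - 1) :=
    hrule.monotoneOn_r ha1 (show 1 ≤ a.card + b.card - 1 by omega) (by omega)
  calc dist p (centroid (a + b))
      ≤ dist p (centroid a) + dist (centroid (a + b)) (centroid a) := dist_triangle_right _ _ _
    _ < r (a.card + b.card - 1) + d (a.card + b.card) :=
        add_lt_add_of_lt_of_le ((hca p hp).trans_le hr)
          ((dist_centroid_add_left_le a b ha).trans (not_lt.mp hab))
    _ < r (a.card + b.card) := by linarith [hrule.2.2.2.2.1 (a.card + b.card) (by omega)]

lemma Confined.add {r d : ℕ → ℝ} (hrule : ClusteringRule r d) {a b : Multiset V}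
    (ha : a ≠ 0) (hb : b ≠ 0) (hca : Confined r a) (hcb : Confined r b)
    (hab : ¬ Separated d a b) : Confined r (a + b) := by
  intro p hp
  rw [Multiset.card_add]
  rcases Multiset.mem_add.mp hp with hpa | hpb
  · exact hca.dist_centroid_add_lt hrule ha hb hab hpa
  · rw [add_comm a, add_comm a.card]
    exact hcb.dist_centroid_add_lt hrule hb ha (fun hba => hab (symm hba)) hpb

lemma exists_pairwise_separated {r d : ℕ → ℝ} (hrule : ClusteringRule r d)
    (P : Multiset (Multiset V)) (hP : ∀ s ∈ P, s ≠ 0 ∧ Confined r s) :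
    ∃ Q : Multiset (Multiset V), Q.sum = P.sum ∧ (∀ s ∈ Q, s ≠ 0 ∧ Confined r s) ∧
      Q.Pairwise (Separated d) := by
  induction hn : P.card using Nat.strong_induction_on generalizing P with
  | _ n ih =>
    by_cases hsep : P.Pairwise (Separated d)
    · exact ⟨P, rfl, hP, hsep⟩
    obtain ⟨a, b, hle, hab⟩ := Multiset.exists_pair_le_of_not_pairwise hsep
    obtain ⟨R, rfl⟩ := Multiset.le_iff_exists_add.mp hle
    obtain ⟨ha, hca⟩ := hP a (by simp)
    obtain ⟨hb, hcb⟩ := hP b (by simp)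
    have hmerged : ∀ s ∈ (a + b) ::ₘ R, s ≠ 0 ∧ Confined r s := by
      intro s hs
      rcases Multiset.mem_cons.mp hs with rfl | hs
      · exact ⟨by simp [ha], hca.add hrule ha hb hcb hab⟩
      · exact hP s (by simp [hs])
    obtain ⟨Q, hQsum, hQ⟩ := ih _ (by simp [← hn]) _ hmerged rfl
    exact ⟨Q, by simp [hQsum, add_assoc], hQ⟩

end Clusters

theorem exists_cluster_decomposition_general {V : Type*} [NormedAddCommGroup V]
    [InnerProductSpace ℝ V] (r d : ℕ → ℝ) (hrule : ClusteringRule r d)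
    (z : Multiset V) :
    ∃ (m : ℕ) (Z : Fin m → Multiset V),
      (∀ i, Z i ≠ 0) ∧ (∑ i, Z i) = z ∧
      (∀ i, ∀ p ∈ Z i, dist p (centroid (Z i)) < r (Z i).card) ∧
      (∀ i j, i ≠ j →
        d ((Z i).card + (Z j).card) < dist (centroid (Z i)) (centroid (Z j))) := by
  have hsingletons : ∀ s ∈ z.map ({·}), s ≠ 0 ∧ Confined r s := by
    simp only [Multiset.mem_map, forall_exists_index, and_imp]
    rintro _ p - rfl
    exact ⟨Multiset.singleton_ne_zero p, confined_singleton hrule.1 p⟩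
  obtain ⟨Q, hQsum, hQ, l, rfl, hl⟩ := exists_pairwise_separated hrule _ hsingletons
  refine ⟨l.length, fun i => l[i], fun i => (hQ _ (by simp)).1, ?_,
    fun i => (hQ _ (by simp)).2, fun i j hij => ?_⟩
  · refine (Fin.sum_univ_getElem l).trans ?_
    rw [← Multiset.sum_coe, hQsum, Multiset.sum_map_singleton]
  · exact hl.rel_getElem_of_ne i.2 j.2 (Fin.val_ne_of_ne hij)

/-- Every nonempty finite multiset of points admits a cluster decomposition: confined,
pairwise separated pieces summing to `z`. -/
theorem exists_cluster_decomposition {V : Type*} [NormedAddCommGroup V]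
    [InnerProductSpace ℝ V] (r d : ℕ → ℝ) (hrule : ClusteringRule r d)
    (z : Multiset V) (hz : z ≠ 0) :
    ∃ (m : ℕ) (Z : Fin m → Multiset V),
      (∀ i, Z i ≠ 0) ∧ (∑ i, Z i) = z ∧
      (∀ i, ∀ p ∈ Z i, dist p (centroid (Z i)) < r (Z i).card) ∧
      (∀ i j, i ≠ j →
        d ((Z i).card + (Z j).card) < dist (centroid (Z i)) (centroid (Z j))) :=
  exists_cluster_decomposition_general r d hrule z
end

section
/- Fix b > 0 and a finite multiset z of points in ℝ. For each sub-multiset w, let B_w = [c(w) − |w|·b, c(w) + |w|·b] where c(w) is the mean of w and |w| its cardinality. Say z is well contained in B_z if for any consecutive sub-multiset z' ⊆ z (points that are consecutive in the ordering of z), B_{z'} ⊆ B_z. If z is well contained in B_z, then for any decomposition z = z₁ + ... + z_m into nonempty parts with m ≥ 2, some pair of boxes B_{z_i}, B_{z_j} (i ≠ j) intersect. -/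
/-- The mean of the points of `x` indexed by `S`. -/
noncomputable def bmean {n : ℕ} (x : Fin n → ℝ) (S : Finset (Fin n)) : ℝ :=
  (∑ i ∈ S, x i) / S.card

/-- The box of a sub-collection: the closed interval of radius `|S| * b` around its mean. -/
noncomputable def bbox {n : ℕ} (b : ℝ) (x : Fin n → ℝ) (S : Finset (Fin n)) : Set ℝ :=
  Set.Icc (bmean x S - S.card * b) (bmean x S + S.card * b)

/-!
Well containment for consecutive sub-multisets extends to all nonempty ones: the mean of any `k`
points lies between the mean of the `k` smallest and the mean of the `k` largest points, and these
two sub-multisets are consecutive. If the boxes of a decomposition were pairwise disjoint, they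
would be at least two disjoint closed intervals inside `B_z` whose lengths `2 |z_i| b` add up to
the length `2 n b` of `B_z`. This is impossible, as disjoint closed intervals leave a gap.
-/

open Finset

section SumsOverSubsets

variable {ι M : Type*} [AddCommMonoid M] [LinearOrder M] [IsOrderedCancelAddMonoid M]
  {f : ι → M} {s t : Finset ι}

theorem Finset.sum_le_sum_of_card_eq_of_forall_sdiff_le [DecidableEq ι] (hst : #s = #t)
    (h : ∀ i ∈ s \ t, ∀ j ∈ t \ s, f i ≤ f j) : ∑ i ∈ s, f i ≤ ∑ i ∈ t, f i := by
  rw [← sum_sdiff_le_sum_sdiff]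
  rcases (s \ t).eq_empty_or_nonempty with hst' | hne
  · rw [hst', card_eq_zero.1 ((card_sdiff_comm hst).symm.trans (by rw [hst', card_empty]))]
  obtain ⟨i₀, hi₀, hmax⟩ := exists_max_image (s \ t) f hne
  calc ∑ i ∈ s \ t, f i ≤ #(s \ t) • f i₀ := sum_le_card_nsmul _ _ _ hmax
    _ = #(t \ s) • f i₀ := by rw [card_sdiff_comm hst]
    _ ≤ ∑ j ∈ t \ s, f j := card_nsmul_le_sum _ _ _ (h i₀ hi₀)

variable [LinearOrder ι]

theorem Monotone.sum_le_sum_of_isLowerSet (hf : Monotone f) (hs : IsLowerSet (s : Set ι))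
    (hst : #s = #t) : ∑ i ∈ s, f i ≤ ∑ i ∈ t, f i := by
  classical
  refine sum_le_sum_of_card_eq_of_forall_sdiff_le hst fun i hi j hj => hf ?_
  rw [mem_sdiff] at hi hj
  by_contra! hji
  exact hj.2 (hs hji.le hi.1)

theorem Monotone.sum_le_sum_of_isUpperSet (hf : Monotone f) (ht : IsUpperSet (t : Set ι))
    (hst : #s = #t) : ∑ i ∈ s, f i ≤ ∑ i ∈ t, f i := by
  classical
  refine sum_le_sum_of_card_eq_of_forall_sdiff_le hst fun i hi j hj => hf ?_
  rw [mem_sdiff] at hi hj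
  by_contra! hji
  exact hi.2 (ht hji.le hj.1)

end SumsOverSubsets

theorem Fin.exists_Icc_isLowerSet_card {n k : ℕ} (hk : 0 < k) (hkn : k ≤ n) :
    ∃ s t : Fin n, s ≤ t ∧ IsLowerSet (Icc s t : Set (Fin n)) ∧ #(Icc s t) = k := by
  refine ⟨⟨0, by omega⟩, ⟨k - 1, by omega⟩, Fin.mk_le_mk.2 (Nat.zero_le _), ?_, ?_⟩
  · intro i j hji hj
    simp only [coe_Icc, Set.mem_Icc, Fin.le_def] at hj ⊢
    omega
  · simp only [Fin.card_Icc]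
    omega

theorem Fin.exists_Icc_isUpperSet_card {n k : ℕ} (hk : 0 < k) (hkn : k ≤ n) :
    ∃ s t : Fin n, s ≤ t ∧ IsUpperSet (Icc s t : Set (Fin n)) ∧ #(Icc s t) = k := by
  refine ⟨⟨n - k, by omega⟩, ⟨n - 1, by omega⟩, Fin.mk_le_mk.2 (by omega), ?_, ?_⟩
  · intro i j hij hi
    simp only [coe_Icc, Set.mem_Icc, Fin.le_def] at hi ⊢
    omega
  · simp only [Fin.card_Icc]
    omega

theorem right_lt_left_of_disjoint_Icc {α : Type*} [LinearOrder α] {a b a' b' : α}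
    (hd : Disjoint (Set.Icc a b) (Set.Icc a' b')) (ha : a ≤ a') (hab' : a' ≤ b') : b < a' := by
  by_contra! h
  exact Set.disjoint_left.1 hd ⟨ha, h⟩ ⟨le_rfl, hab'⟩

section Intervals

variable {α ι : Type*} [Field α] [LinearOrder α] [IsStrictOrderedRing α]

theorem Set.OrdConnected.Icc_sub_add_subset {I : Set α} (hI : I.OrdConnected) {c₁ c c₂ r : α}
    (hr : 0 ≤ r) (h₁ : c₁ ≤ c) (h₂ : c ≤ c₂) (hI₁ : Icc (c₁ - r) (c₁ + r) ⊆ I)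
    (hI₂ : Icc (c₂ - r) (c₂ + r) ⊆ I) : Icc (c - r) (c + r) ⊆ I :=
  (Set.Icc_subset_Icc (by linarith) (by linarith)).trans <|
    hI.out (hI₁ (Set.left_mem_Icc.2 (by linarith))) (hI₂ (Set.right_mem_Icc.2 (by linarith)))

theorem sum_sub_le_of_pairwiseDisjoint_Icc [DecidableEq ι] {s : Finset ι} {l u : ι → α} {A B : α}
    (hlu : ∀ i ∈ s, l i ≤ u i) (hA : ∀ i ∈ s, A ≤ l i) (hB : ∀ i ∈ s, u i ≤ B) (hAB : A ≤ B)
    (hd : (s : Set ι).PairwiseDisjoint fun i => Set.Icc (l i) (u i)) :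
    ∑ i ∈ s, (u i - l i) ≤ B - A := by
  induction s using Finset.induction_on_max_value l generalizing B with
  | empty => simpa using hAB
  | insert j s hj hmax ih =>
    have hj_mem := mem_insert_self j s
    have hleft (i : ι) (hi : i ∈ s) : u i ≤ l j :=
      (right_lt_left_of_disjoint_Icc (hd (mem_insert_of_mem hi) hj_mem (ne_of_mem_of_not_mem hi hj))
        (hmax i hi) (hlu j hj_mem)).le
    have hs := ih (fun i hi => hlu i (mem_insert_of_mem hi))
      (fun i hi => hA i (mem_insert_of_mem hi)) hleft (hA j hj_mem) (hd.subset (by simp))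
    rw [sum_insert hj]
    linarith [hB j hj_mem]

theorem sum_sub_lt_of_pairwiseDisjoint_Icc [DecidableEq ι] {s : Finset ι} {l u : ι → α} {A B : α}
    (hs : 1 < #s) (hlu : ∀ i ∈ s, l i ≤ u i) (hA : ∀ i ∈ s, A ≤ l i) (hB : ∀ i ∈ s, u i ≤ B)
    (hd : (s : Set ι).PairwiseDisjoint fun i => Set.Icc (l i) (u i)) :
    ∑ i ∈ s, (u i - l i) < B - A := by
  -- every other interval lies strictly left of the one with the largest left endpoint
  obtain ⟨j, hj, hmax⟩ := exists_max_image s l (card_pos.1 (by omega))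
  have hne : (s.erase j).Nonempty := by rw [← card_pos, card_erase_of_mem hj]; omega
  have hgap : ∀ i ∈ s.erase j, u i < l j := fun i hi =>
    right_lt_left_of_disjoint_Icc (hd (mem_of_mem_erase hi) hj (ne_of_mem_erase hi))
      (hmax i (mem_of_mem_erase hi)) (hlu j hj)
  obtain ⟨k, hk, hk_max⟩ := exists_max_image (s.erase j) u hne
  have hrest : ∑ i ∈ s.erase j, (u i - l i) ≤ u k - A :=
    sum_sub_le_of_pairwiseDisjoint_Icc (fun i hi => hlu i (mem_of_mem_erase hi))
      (fun i hi => hA i (mem_of_mem_erase hi)) hk_max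
      ((hA k (mem_of_mem_erase hk)).trans (hlu k (mem_of_mem_erase hk))) (hd.subset (by simp))
  rw [← add_sum_erase s _ hj]
  linarith [hgap k hk, hB j hj]

end Intervals

section Boxes

variable {n : ℕ} {b : ℝ} {x : Fin n → ℝ}

theorem bmean_le_bmean_of_sum_le {S T : Finset (Fin n)} (hST : #S = #T)
    (h : ∑ i ∈ S, x i ≤ ∑ i ∈ T, x i) : bmean x S ≤ bmean x T := by
  unfold bmean
  rw [hST]
  exact div_le_div_of_nonneg_right h (Nat.cast_nonneg _)

theorem bbox_subset_bbox_univ (hb : 0 ≤ b) (hx : Monotone x)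
    (hwc : ∀ s t : Fin n, s ≤ t → bbox b x (Icc s t) ⊆ bbox b x univ)
    {S : Finset (Fin n)} (hS : S.Nonempty) : bbox b x S ⊆ bbox b x univ := by
  have hkn : #S ≤ n := by simpa using card_le_univ S
  obtain ⟨s₁, t₁, hst₁, hlow, hcard₁⟩ := Fin.exists_Icc_isLowerSet_card hS.card_pos hkn
  obtain ⟨s₂, t₂, hst₂, hupp, hcard₂⟩ := Fin.exists_Icc_isUpperSet_card hS.card_pos hkn
  have hbox₁ := hwc s₁ t₁ hst₁
  have hbox₂ := hwc s₂ t₂ hst₂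
  unfold bbox at hbox₁ hbox₂ ⊢
  rw [hcard₁] at hbox₁
  rw [hcard₂] at hbox₂
  exact Set.ordConnected_Icc.Icc_sub_add_subset (by positivity)
    (bmean_le_bmean_of_sum_le hcard₁ (hx.sum_le_sum_of_isLowerSet hlow hcard₁))
    (bmean_le_bmean_of_sum_le hcard₂.symm (hx.sum_le_sum_of_isUpperSet hupp hcard₂.symm))
    hbox₁ hbox₂

end Boxes

/-- No-splitting lemma: if a multiset of points in `ℝ` (sorted as a monotone tuple `x`) is
well contained in its box (every consecutive sub-multiset's box is contained in the total
box), then any decomposition into `m ≥ 2` nonempty parts has two parts whose boxes meet. -/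
theorem no_splitting {n : ℕ} (b : ℝ) (hb : 0 < b) (x : Fin n → ℝ) (hx : Monotone x)
    (hwc : ∀ s t : Fin n, s ≤ t → bbox b x (Finset.Icc s t) ⊆ bbox b x Finset.univ)
    (m : ℕ) (hm : 2 ≤ m) (P : Fin m → Finset (Fin n))
    (hPne : ∀ i, (P i).Nonempty)
    (hPdisj : ∀ i j, i ≠ j → Disjoint (P i) (P j))
    (hPcover : ∀ a : Fin n, ∃ i, a ∈ P i) :
    ∃ i j, i ≠ j ∧ (bbox b x (P i) ∩ bbox b x (P j)).Nonempty := by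
  by_contra! hsplit
  have hboxes : ((univ : Finset (Fin m)) : Set (Fin m)).PairwiseDisjoint
      fun i => bbox b x (P i) := fun i _ j _ hij =>
    Set.disjoint_iff_inter_eq_empty.2 (hsplit i j hij)
  have hcard : ∑ i, #(P i) = n := calc
    ∑ i, #(P i) = #(univ.biUnion P) := (card_biUnion fun i _ j _ hij => hPdisj i j hij).symm
    _ = #(univ : Finset (Fin n)) := congrArg card <| eq_univ_of_forall fun a =>
      mem_biUnion.2 ((hPcover a).imp fun i hi => ⟨mem_univ i, hi⟩)
    _ = n := card_fin n
  have hlu (i : Fin m) : bmean x (P i) - #(P i) * b ≤ bmean x (P i) + #(P i) * b := by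
    have : (0 : ℝ) ≤ #(P i) * b := by positivity
    linarith
  have hsub (i : Fin m) := (Set.Icc_subset_Icc_iff (hlu i)).1 <|
    bbox_subset_bbox_univ hb.le hx hwc (hPne i)
  have hlength := sum_sub_lt_of_pairwiseDisjoint_Icc (s := univ)
    (l := fun i => bmean x (P i) - #(P i) * b) (u := fun i => bmean x (P i) + #(P i) * b)
    (by rwa [card_univ, Fintype.card_fin]) (fun i _ => hlu i) (fun i _ => (hsub i).1)
    (fun i _ => (hsub i).2) hboxes
  have hsum : ∑ i, ((bmean x (P i) + #(P i) * b) - (bmean x (P i) - #(P i) * b)) =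
      2 * b * ∑ i, (#(P i) : ℝ) := by
    rw [mul_sum]
    exact sum_congr rfl fun i _ => by ring
  rw [hsum, ← Nat.cast_sum, hcard, card_univ, Fintype.card_fin] at hlength
  linarith
end

section
/- Fix b > 0. For any finite multiset z of points in ℝ, there is a unique decomposition z = z₁ + ... + z_m such that each z_i is well contained in its box B_{z_i} (every consecutive sub-multiset's box is contained in B_{z_i}), the boxes B_{z_i} are pairwise disjoint, and they are ordered B_{z₁} < B_{z₂} < ... < B_{z_m}. -/
/-- `D` is a box decomposition of the sorted tuple `x`: its blocks are nonempty, partition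
the index set, are consecutive, well contained in their boxes, and the boxes are pairwise
disjoint and ordered compatibly with the indices. -/
def IsBoxDecomp {n : ℕ} (b : ℝ) (x : Fin n → ℝ) (D : Finset (Finset (Fin n))) : Prop :=
  (∀ S ∈ D, S.Nonempty) ∧
  (∀ a : Fin n, ∃! S : Finset (Fin n), S ∈ D ∧ a ∈ S) ∧
  (∀ S ∈ D, ∀ a ∈ S, ∀ c ∈ S, ∀ t : Fin n, a ≤ t → t ≤ c → t ∈ S) ∧
  (∀ S ∈ D, ∀ a ∈ S, ∀ c ∈ S, a ≤ c → bbox b x (Finset.Icc a c) ⊆ bbox b x S) ∧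
  (∀ S ∈ D, ∀ T ∈ D, S ≠ T → bbox b x S ∩ bbox b x T = ∅) ∧
  (∀ S ∈ D, ∀ T ∈ D, (∀ a ∈ S, ∀ c ∈ T, a < c) →
    ∀ u ∈ bbox b x S, ∀ v ∈ bbox b x T, u < v)

open Finset

theorem Set.OrdConnected.union_of_covBy {ι : Type*} [LinearOrder ι] {s t : Set ι} {i j : ι}
    (hs : s.OrdConnected) (ht : t.OrdConnected) (hi : i ∈ s) (hj : j ∈ t) (hij : i ⋖ j) :
    (s ∪ t).OrdConnected := by
  refine ⟨fun u hu v hv w ⟨huw, hwv⟩ => ?_⟩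
  rcases le_or_gt w i with hwi | hiw
  · rcases hu with hu | hu
    · exact Or.inl (hs.out hu hi ⟨huw, hwi⟩)
    · exact Or.inr (ht.out hu hj ⟨huw, hwi.trans hij.le⟩)
  · rcases hv with hv | hv
    · exact Or.inl (hs.out hi hv ⟨hiw.le, hwv⟩)
    · exact Or.inr (ht.out hj hv ⟨hij.ge_of_gt hiw, hwv⟩)

section IntervalPartition

variable {ι : Type*} [LinearOrder ι]

theorem Finset.Icc_subset_of_ordConnected [LocallyFiniteOrder ι] {S : Finset ι}
    (hS : (S : Set ι).OrdConnected) {a c : ι} (ha : a ∈ S) (hc : c ∈ S) : Icc a c ⊆ S := by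
  rw [← coe_subset, coe_Icc]
  exact hS.out ha hc

theorem Finset.eq_Icc_min'_max' [LocallyFiniteOrder ι] {S : Finset ι}
    (hS : (S : Set ι).OrdConnected) (hne : S.Nonempty) : S = Icc (S.min' hne) (S.max' hne) :=
  Subset.antisymm (fun _ ht => mem_Icc.2 ⟨S.min'_le _ ht, S.le_max' _ ht⟩)
    (Icc_subset_of_ordConnected hS (S.min'_mem hne) (S.max'_mem hne))

theorem Finset.Icc_union_Icc_eq_Icc_of_covBy [LocallyFiniteOrder ι] {a i j c : ι} (hai : a ≤ i)
    (hij : i ⋖ j) (hjc : j ≤ c) : Icc a i ∪ Icc j c = Icc a c := by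
  ext t
  simp only [mem_union, mem_Icc]
  constructor
  · rintro (⟨hat, hti⟩ | ⟨hjt, htc⟩)
    · exact ⟨hat, hti.trans (hij.le.trans hjc)⟩
    · exact ⟨hai.trans (hij.le.trans hjt), htc⟩
  · rintro ⟨hat, htc⟩
    rcases le_or_gt t i with hti | hit
    · exact Or.inl ⟨hat, hti⟩
    · exact Or.inr ⟨hij.ge_of_gt hit, htc⟩

theorem Finset.card_Icc_eq_add_of_covBy [LocallyFiniteOrder ι] {a i j c : ι} (hai : a ≤ i)
    (hij : i ⋖ j) (hjc : j ≤ c) : #(Icc a c) = #(Icc a i) + #(Icc j c) := by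
  rw [← Icc_union_Icc_eq_Icc_of_covBy hai hij hjc, card_union_of_disjoint]
  exact disjoint_left.2 fun t h₁ h₂ =>
    ((mem_Icc.1 h₁).2.trans_lt hij.lt).not_ge (mem_Icc.1 h₂).1

theorem Finset.card_insert_erase_erase_lt {α : Type*} [DecidableEq α] {s : Finset α} {a b : α}
    (ha : a ∈ s) (hb : b ∈ s) (hab : a ≠ b) (c : α) : #(insert c ((s.erase a).erase b)) < #s := by
  have h₁ := card_erase_lt_of_mem (mem_erase.2 ⟨hab.symm, hb⟩)
  have h₂ := card_erase_lt_of_mem ha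
  have h₃ := card_insert_le c ((s.erase a).erase b)
  omega

structure IsIntervalPartition (D : Finset (Finset ι)) : Prop where
  nonempty : ∀ S ∈ D, S.Nonempty
  existsUnique_mem : ∀ a, ∃! S, S ∈ D ∧ a ∈ S
  ordConnected : ∀ S ∈ D, (S : Set ι).OrdConnected

namespace IsIntervalPartition

variable {D : Finset (Finset ι)} {S T : Finset ι}

theorem eq_of_mem (hD : IsIntervalPartition D) (hS : S ∈ D) (hT : T ∈ D) {a : ι} (haS : a ∈ S)
    (haT : a ∈ T) : S = T :=
  (hD.existsUnique_mem a).unique ⟨hS, haS⟩ ⟨hT, haT⟩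

theorem forall_lt_of_lt (hD : IsIntervalPartition D) (hS : S ∈ D) (hT : T ∈ D) (hST : S ≠ T)
    {s t : ι} (hs : s ∈ S) (ht : t ∈ T) (hst : s < t) : ∀ i ∈ S, ∀ j ∈ T, i < j := by
  intro i hi j hj
  by_contra! hji
  rcases le_or_gt s j with hsj | hjs
  · exact hST (hD.eq_of_mem hS hT ((hD.ordConnected S hS).out hs hi ⟨hsj, hji⟩) hj)
  · exact hST (hD.eq_of_mem hS hT hs ((hD.ordConnected T hT).out hj ht ⟨hjs.le, hst.le⟩))

theorem induction_on_covBy [LocallyFiniteOrder ι] (hD : IsIntervalPartition D)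
    {P : Finset ι → Finset ι → Prop}
    (adjacent : ∀ S ∈ D, ∀ T ∈ D, S ≠ T → ∀ i ∈ S, ∀ j ∈ T, i ⋖ j → P S T)
    (step : ∀ S ∈ D, ∀ U ∈ D, ∀ T ∈ D, P S U → U ≠ T → ∀ i ∈ U, ∀ j ∈ T, i ⋖ j → P S T)
    (hS : S ∈ D) (hT : T ∈ D) (hST : S ≠ T) {s t : ι} (hs : s ∈ S) (ht : t ∈ T) (hst : s < t) :
    P S T := by
  induction hN : #(Icc s t) using Nat.strong_induction_on generalizing T t with
  | _ N ih =>
  obtain ⟨i, hsi, hit⟩ := exists_le_covBy_of_lt hst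
  obtain ⟨U, ⟨hU, hiU⟩, -⟩ := hD.existsUnique_mem i
  have hcard : #(Icc s i) < N := hN ▸ card_lt_card (Icc_ssubset_Icc_right hst.le le_rfl hit.lt)
  have hsi' (hSU : S ≠ U) : s < i := hsi.lt_of_ne fun h => hSU (hD.eq_of_mem hS hU hs (h ▸ hiU))
  by_cases hUT : U = T
  · subst hUT
    exact ih _ hcard hU hST hiU (hsi' hST) rfl
  by_cases hSU : S = U
  · subst hSU
    exact adjacent S hS T hT hST i hiU t ht hit
  exact step S hS U hU T hT (ih _ hcard hU hSU hiU (hsi' hSU) rfl) hUT i hiU t ht hit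

theorem merge (hD : IsIntervalPartition D) (hS : S ∈ D) (hT : T ∈ D) {i j : ι} (hi : i ∈ S)
    (hj : j ∈ T) (hij : i ⋖ j) : IsIntervalPartition (insert (S ∪ T) ((D.erase S).erase T)) where
  nonempty U hU := by
    rcases mem_insert.1 hU with rfl | hU
    · exact ⟨i, mem_union_left T hi⟩
    · exact hD.nonempty U (mem_of_mem_erase (mem_of_mem_erase hU))
  existsUnique_mem a := by
    by_cases ha : a ∈ S ∪ T
    · refine ⟨S ∪ T, ⟨mem_insert_self _ _, ha⟩, fun U ⟨hU, haU⟩ => ?_⟩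
      rcases mem_insert.1 hU with rfl | hU
      · rfl
      obtain ⟨hUT, hUS, hUD⟩ : U ≠ T ∧ U ≠ S ∧ U ∈ D := by simpa using hU
      rcases mem_union.1 ha with haS | haT
      · exact (hUS (hD.eq_of_mem hUD hS haU haS)).elim
      · exact (hUT (hD.eq_of_mem hUD hT haU haT)).elim
    · obtain ⟨W, ⟨hW, haW⟩, hWu⟩ := hD.existsUnique_mem a
      have hWS : W ≠ S := by rintro rfl; exact ha (mem_union_left T haW)
      have hWT : W ≠ T := by rintro rfl; exact ha (mem_union_right S haW)
      refine ⟨W, ⟨mem_insert_of_mem (mem_erase.2 ⟨hWT, mem_erase.2 ⟨hWS, hW⟩⟩), haW⟩,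
        fun U ⟨hU, haU⟩ => ?_⟩
      rcases mem_insert.1 hU with rfl | hU
      · exact (ha haU).elim
      · exact hWu U ⟨mem_of_mem_erase (mem_of_mem_erase hU), haU⟩
  ordConnected U hU := by
    rcases mem_insert.1 hU with rfl | hU
    · rw [coe_union]
      exact (hD.ordConnected S hS).union_of_covBy (hD.ordConnected T hT) hi hj hij
    · exact hD.ordConnected U (mem_of_mem_erase (mem_of_mem_erase hU))

theorem subset_of_forall_exists_subset {D' : Finset (Finset ι)} (hD' : IsIntervalPartition D')
    (h : ∀ T ∈ D', ∃ S ∈ D, T ⊆ S) (h' : ∀ S ∈ D, ∃ T ∈ D', S ⊆ T) : D' ⊆ D := by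
  intro T hT
  obtain ⟨S, hS, hTS⟩ := h T hT
  obtain ⟨T', hT', hST'⟩ := h' S hS
  obtain ⟨t, ht⟩ := hD'.nonempty T hT
  obtain rfl := hD'.eq_of_mem hT hT' ht (hST' (hTS ht))
  rwa [hTS.antisymm hST']

end IsIntervalPartition

theorem isIntervalPartition_singletons [Fintype ι] :
    IsIntervalPartition (univ.image fun i : ι => ({i} : Finset ι)) where
  nonempty S hS := by
    obtain ⟨i, -, rfl⟩ := mem_image.1 hS
    exact singleton_nonempty i
  existsUnique_mem a := ⟨{a}, ⟨mem_image_of_mem _ (mem_univ a), mem_singleton_self a⟩,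
    fun S ⟨hS, haS⟩ => by
      obtain ⟨i, -, rfl⟩ := mem_image.1 hS
      rw [mem_singleton.1 haS]⟩
  ordConnected S hS := by
    obtain ⟨i, -, rfl⟩ := mem_image.1 hS
    rw [coe_singleton]
    exact Set.ordConnected_singleton

end IntervalPartition

open scoped BigOperators

section Box

variable {n : ℕ} (b : ℝ) (x : Fin n → ℝ) {A B P P' Q S T : Finset (Fin n)}

noncomputable def boxLo (S : Finset (Fin n)) : ℝ := bmean x S - #S * b

noncomputable def boxHi (S : Finset (Fin n)) : ℝ := bmean x S + #S * b

def WellContained (S : Finset (Fin n)) : Prop :=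
  ∀ a ∈ S, ∀ c ∈ S, a ≤ c → bbox b x (Icc a c) ⊆ bbox b x S

theorem bmean_eq_expect (S : Finset (Fin n)) : bmean x S = 𝔼 i ∈ S, x i :=
  (expect_eq_sum_div_card S x).symm

theorem bmean_neg (S : Finset (Fin n)) : bmean (-x) S = -bmean x S := by
  simp only [bmean_eq_expect, Pi.neg_apply, expect_neg_distrib]

theorem boxHi_neg (S : Finset (Fin n)) : boxHi b (-x) S = -boxLo b x S := by
  rw [boxHi, boxLo, bmean_neg]; ring

theorem boxHi_sub_boxLo (S : Finset (Fin n)) : boxHi b x S - boxLo b x S = 2 * #S * b := by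
  rw [boxHi, boxLo]; ring

variable {b x}

theorem mem_bbox {u : ℝ} : u ∈ bbox b x S ↔ boxLo b x S ≤ u ∧ u ≤ boxHi b x S := Iff.rfl

theorem boxLo_le_boxHi (hb : 0 ≤ b) (S : Finset (Fin n)) : boxLo b x S ≤ boxHi b x S :=
  sub_nonneg.1 ((boxHi_sub_boxLo b x S).symm ▸ mul_nonneg (by positivity) hb)

theorem bbox_subset_bbox_iff (hb : 0 ≤ b) :
    bbox b x A ⊆ bbox b x S ↔ boxLo b x S ≤ boxLo b x A ∧ boxHi b x A ≤ boxHi b x S :=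
  Set.Icc_subset_Icc_iff (boxLo_le_boxHi hb A)

theorem bmean_le_bmean (hA : A.Nonempty) (hB : B.Nonempty) (h : ∀ i ∈ A, ∀ j ∈ B, x i ≤ x j) :
    bmean x A ≤ bmean x B := by
  rw [bmean_eq_expect, bmean_eq_expect]
  exact (expect_le hA fun i hi => le_sup' x hi).trans
    (le_expect hB fun j hj => sup'_le hA x fun i hi => h i hi j hj)

theorem card_mul_bmean_union (h : Disjoint A B) :
    ((#A : ℝ) + #B) * bmean x (A ∪ B) = #A * bmean x A + #B * bmean x B := by
  simp only [bmean_eq_expect, ← Nat.cast_add, ← card_union_of_disjoint h, card_mul_expect,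
    sum_union h]

theorem boxHi_union_le_boxHi_union (hPQ : Disjoint P Q) (hP'Q : Disjoint P' Q)
    (hP : P.Nonempty) (hcard : #P ≤ #P') (hhi : boxHi b x P ≤ boxHi b x P')
    (hQ : bmean x Q ≤ bmean x P' + (#P' + #Q) * b) :
    boxHi b x (P ∪ Q) ≤ boxHi b x (P' ∪ Q) := by
  have hk : (0 : ℝ) < #P := by exact_mod_cast hP.card_pos
  have hkk : (#P : ℝ) ≤ #P' := by exact_mod_cast hcard
  have hj : (0 : ℝ) ≤ #Q := Nat.cast_nonneg _
  have hU := card_mul_bmean_union (x := x) hPQ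
  have hU' := card_mul_bmean_union (x := x) hP'Q
  have key : ((#P : ℝ) + #Q) * (#P' + #Q) * (boxHi b x (P' ∪ Q) - boxHi b x (P ∪ Q)) =
      #P * (#P' + #Q) * (boxHi b x P' - boxHi b x P) +
        #Q * (#P' - #P) * (bmean x P' + (#P' + #Q) * b - bmean x Q) := by
    simp only [boxHi, card_union_of_disjoint hPQ, card_union_of_disjoint hP'Q, Nat.cast_add]
    linear_combination (#P + #Q : ℝ) * hU' - (#P' + #Q : ℝ) * hU
  have hrhs : 0 ≤ ((#P : ℝ) + #Q) * (#P' + #Q) * (boxHi b x (P' ∪ Q) - boxHi b x (P ∪ Q)) := by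
    rw [key]
    have := mul_nonneg (mul_nonneg hk.le (by linarith : (0 : ℝ) ≤ #P' + #Q)) (sub_nonneg.2 hhi)
    have := mul_nonneg (mul_nonneg hj (sub_nonneg.2 hkk)) (sub_nonneg.2 hQ)
    linarith
  exact sub_nonneg.1 (nonneg_of_mul_nonneg_right hrhs (mul_pos (by linarith) (by linarith)))

theorem boxHi_le_boxHi_union (hPQ : Disjoint P Q) (hP : P.Nonempty)
    (hQ : bmean x P ≤ bmean x Q + (#P + #Q) * b) : boxHi b x P ≤ boxHi b x (P ∪ Q) := by
  have hk : (0 : ℝ) < #P := by exact_mod_cast hP.card_pos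
  have hj : (0 : ℝ) ≤ #Q := Nat.cast_nonneg _
  have hU := card_mul_bmean_union (x := x) hPQ
  have key : ((#P : ℝ) + #Q) * (boxHi b x (P ∪ Q) - boxHi b x P) =
      #Q * (bmean x Q + (#P + #Q) * b - bmean x P) := by
    simp only [boxHi, card_union_of_disjoint hPQ, Nat.cast_add]
    linear_combination hU
  have hrhs : 0 ≤ ((#P : ℝ) + #Q) * (boxHi b x (P ∪ Q) - boxHi b x P) := by
    rw [key]
    exact mul_nonneg hj (sub_nonneg.2 hQ)
  exact sub_nonneg.1 (nonneg_of_mul_nonneg_right hrhs (by linarith))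

theorem bbox_subset_bbox_union (hb : 0 ≤ b) (hPQ : Disjoint P Q) (hP : P.Nonempty)
    (h : |bmean x P - bmean x Q| ≤ (#P + #Q) * b) : bbox b x P ⊆ bbox b x (P ∪ Q) := by
  obtain ⟨h₁, h₂⟩ := abs_sub_le_iff.1 h
  refine (bbox_subset_bbox_iff hb).2 ⟨?_, boxHi_le_boxHi_union hPQ hP (by linarith)⟩
  have := boxHi_le_boxHi_union (b := b) (x := -x) hPQ hP (by rw [bmean_neg, bmean_neg]; linarith)
  rw [boxHi_neg, boxHi_neg] at this
  linarith

theorem boxHi_union_le_boxHi_union_of_subset (hb : 0 ≤ b) (hAS : A ⊆ S) (hBT : B ⊆ T)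
    (hST : Disjoint S T) (hA : A.Nonempty) (hB : B.Nonempty)
    (hAhi : boxHi b x A ≤ boxHi b x S) (hBhi : boxHi b x B ≤ boxHi b x T)
    (hAB : bmean x A ≤ bmean x B) (hTS : bmean x T ≤ bmean x S + (#S + #T) * b) :
    boxHi b x (A ∪ B) ≤ boxHi b x (S ∪ T) := by
  have hAT : bmean x A ≤ bmean x T + (#T + #A) * b := by
    have : (0 : ℝ) ≤ #A * b := mul_nonneg (Nat.cast_nonneg _) hb
    have : (0 : ℝ) ≤ #B * b := mul_nonneg (Nat.cast_nonneg _) hb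
    rw [boxHi, boxHi] at hBhi
    linarith
  calc boxHi b x (A ∪ B) = boxHi b x (B ∪ A) := by rw [union_comm]
    _ ≤ boxHi b x (T ∪ A) := boxHi_union_le_boxHi_union (hST.mono hAS hBT).symm
          (hST.mono_left hAS).symm hB (card_le_card hBT) hBhi hAT
    _ = boxHi b x (A ∪ T) := by rw [union_comm]
    _ ≤ boxHi b x (S ∪ T) := boxHi_union_le_boxHi_union (hST.mono_left hAS) hST hA
          (card_le_card hAS) hAhi hTS

theorem bbox_union_subset_bbox_union (hb : 0 ≤ b) (hAS : A ⊆ S) (hBT : B ⊆ T)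
    (hST : Disjoint S T) (hA : A.Nonempty) (hB : B.Nonempty)
    (hAS' : bbox b x A ⊆ bbox b x S) (hBT' : bbox b x B ⊆ bbox b x T)
    (hAB : bmean x A ≤ bmean x B) (hov : boxLo b x T ≤ boxHi b x S) :
    bbox b x (A ∪ B) ⊆ bbox b x (S ∪ T) := by
  rw [bbox_subset_bbox_iff hb] at hAS' hBT' ⊢
  have hTS : bmean x T ≤ bmean x S + (#S + #T) * b := by
    rw [boxLo, boxHi] at hov
    linarith
  refine ⟨?_, boxHi_union_le_boxHi_union_of_subset hb hAS hBT hST hA hB hAS'.2 hBT'.2 hAB hTS⟩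
  have := boxHi_union_le_boxHi_union_of_subset (x := -x) hb hBT hAS hST.symm hB hA
    (by rw [boxHi_neg, boxHi_neg]; linarith) (by rw [boxHi_neg, boxHi_neg]; linarith)
    (by rw [bmean_neg, bmean_neg]; linarith) (by rw [bmean_neg, bmean_neg]; linarith)
  rw [boxHi_neg, boxHi_neg, union_comm B, union_comm T] at this
  linarith

theorem wellContained_singleton (i : Fin n) : WellContained b x {i} := by
  intro a ha c hc _
  rw [mem_singleton.1 ha, mem_singleton.1 hc, Icc_self]

theorem WellContained.union (hb : 0 ≤ b) (hx : Monotone x) (hS : (S : Set (Fin n)).OrdConnected)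
    (hT : (T : Set (Fin n)).OrdConnected) (hST : ∀ s ∈ S, ∀ t ∈ T, s < t) {i j : Fin n}
    (hi : i ∈ S) (hj : j ∈ T) (hij : i ⋖ j) (wS : WellContained b x S)
    (wT : WellContained b x T) (hov : boxLo b x T ≤ boxHi b x S) :
    WellContained b x (S ∪ T) := by
  have hdisj : Disjoint S T := disjoint_left.2 fun s hs hs' => (hST s hs s hs').false
  have hmean : bmean x S ≤ bmean x T :=
    bmean_le_bmean ⟨i, hi⟩ ⟨j, hj⟩ fun s hs t ht => hx (hST s hs t ht).le
  have habs : |bmean x S - bmean x T| ≤ (#S + #T) * b := by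
    have : 0 ≤ ((#S : ℝ) + #T) * b := mul_nonneg (by positivity) hb
    rw [boxLo, boxHi] at hov
    rw [abs_sub_le_iff]
    constructor <;> linarith
  have hSU : bbox b x S ⊆ bbox b x (S ∪ T) := bbox_subset_bbox_union hb hdisj ⟨i, hi⟩ habs
  have hTU : bbox b x T ⊆ bbox b x (S ∪ T) := by
    rw [union_comm]
    exact bbox_subset_bbox_union hb hdisj.symm ⟨j, hj⟩ (by rwa [abs_sub_comm, add_comm])
  intro a ha c hc hac
  rcases mem_union.1 ha with haS | haT <;> rcases mem_union.1 hc with hcS | hcT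
  · exact (wS a haS c hcS hac).trans hSU
  · have hai : a ≤ i := hij.le_of_lt (hST a haS j hj)
    have hjc : j ≤ c := hij.ge_of_gt (hST i hi c hcT)
    rw [← Icc_union_Icc_eq_Icc_of_covBy hai hij hjc]
    refine bbox_union_subset_bbox_union hb (Icc_subset_of_ordConnected hS haS hi)
      (Icc_subset_of_ordConnected hT hj hcT) hdisj (nonempty_Icc.2 hai) (nonempty_Icc.2 hjc)
      (wS a haS i hi hai) (wT j hj c hcT hjc) (bmean_le_bmean (nonempty_Icc.2 hai)
      (nonempty_Icc.2 hjc) fun s hs t ht => hx ?_) hov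
    exact (mem_Icc.1 hs).2.trans (hij.le.trans (mem_Icc.1 ht).1)
  · exact ((hST c hcS a haT).not_ge hac).elim
  · exact (wT a haT c hcT hac).trans hTU

theorem two_mul_card_mul_lt_of_covBy {a i j c : Fin n} (hai : a ≤ i) (hij : i ⋖ j) (hjc : j ≤ c)
    {lo hi : ℝ} (h : 2 * #(Icc a i) * b ≤ hi - lo) (hsep : hi < boxLo b x (Icc j c)) :
    2 * #(Icc a c) * b < boxHi b x (Icc j c) - lo := by
  have := boxHi_sub_boxLo b x (Icc j c)
  rw [card_Icc_eq_add_of_covBy hai hij hjc, Nat.cast_add]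
  linarith

end Box

section Decomposition

variable {n : ℕ} {b : ℝ} {x : Fin n → ℝ} {D D' : Finset (Finset (Fin n))} {S T : Finset (Fin n)}

theorem isBoxDecomp_of_boxHi_lt_boxLo (hb : 0 ≤ b) (hD : IsIntervalPartition D)
    (hwc : ∀ S ∈ D, WellContained b x S)
    (hadj : ∀ S ∈ D, ∀ T ∈ D, S ≠ T → ∀ i ∈ S, ∀ j ∈ T, i ⋖ j → boxHi b x S < boxLo b x T) :
    IsBoxDecomp b x D := by
  have hsep {S T} (hS : S ∈ D) (hT : T ∈ D) (hST : S ≠ T) {s t} (hs : s ∈ S) (ht : t ∈ T)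
      (hst : s < t) : boxHi b x S < boxLo b x T :=
    hD.induction_on_covBy hadj (fun _ _ U hU T hT hSU hUT i hi j hj hij =>
      hSU.trans ((boxLo_le_boxHi hb U).trans_lt (hadj U hU T hT hUT i hi j hj hij)))
      hS hT hST hs ht hst
  refine ⟨hD.nonempty, hD.existsUnique_mem,
    fun S hS a ha c hc t hat htc => (hD.ordConnected S hS).out ha hc ⟨hat, htc⟩, hwc, ?_, ?_⟩
  · intro S hS T hT hST
    obtain ⟨s, hs⟩ := hD.nonempty S hS
    obtain ⟨t, ht⟩ := hD.nonempty T hT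
    have hst : s ≠ t := fun h => hST (hD.eq_of_mem hS hT hs (h ▸ ht))
    refine Set.eq_empty_iff_forall_notMem.2 fun u ⟨huS, huT⟩ => ?_
    rw [mem_bbox] at huS huT
    rcases hst.lt_or_gt with h | h
    · linarith [hsep hS hT hST hs ht h]
    · linarith [hsep hT hS hST.symm ht hs h]
  · intro S hS T hT hlt u hu v hv
    obtain ⟨s, hs⟩ := hD.nonempty S hS
    obtain ⟨t, ht⟩ := hD.nonempty T hT
    have hST : S ≠ T := by rintro rfl; exact (hlt s hs s hs).false
    exact (mem_bbox.1 hu).2.trans_lt ((hsep hS hT hST hs ht (hlt s hs t ht)).trans_le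
      (mem_bbox.1 hv).1)

theorem exists_isBoxDecomp (hb : 0 ≤ b) (hx : Monotone x) : ∃ D, IsBoxDecomp b x D := by
  obtain ⟨D, ⟨hD, hwc⟩, hmin⟩ := WellFounded.has_min (InvImage.wf card wellFounded_lt)
    {D : Finset (Finset (Fin n)) | IsIntervalPartition D ∧ ∀ S ∈ D, WellContained b x S}
    ⟨_, isIntervalPartition_singletons, by simp [wellContained_singleton]⟩
  refine ⟨D, isBoxDecomp_of_boxHi_lt_boxLo hb hD hwc fun S hS T hT hST i hi j hj hij => ?_⟩
  by_contra! hov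
  refine hmin _ ⟨hD.merge hS hT hi hj hij, fun U hU => ?_⟩ (card_insert_erase_erase_lt hS hT hST _)
  rcases mem_insert.1 hU with rfl | hU
  · exact (hwc S hS).union hb hx (hD.ordConnected S hS) (hD.ordConnected T hT)
      (hD.forall_lt_of_lt hS hT hST hi hj hij.lt) hi hj hij (hwc T hT) hov
  · exact hwc U (mem_of_mem_erase (mem_of_mem_erase hU))

namespace IsBoxDecomp

theorem isIntervalPartition (hD : IsBoxDecomp b x D) : IsIntervalPartition D :=
  ⟨hD.1, hD.2.1, fun S hS => ⟨fun a ha c hc t ht => hD.2.2.1 S hS a ha c hc t ht.1 ht.2⟩⟩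

theorem wellContained (hD : IsBoxDecomp b x D) (hS : S ∈ D) : WellContained b x S :=
  hD.2.2.2.1 S hS

theorem boxHi_Icc_lt_boxLo_Icc (hb : 0 ≤ b) (hD : IsBoxDecomp b x D) (hS : S ∈ D) (hT : T ∈ D)
    (hST : S ≠ T) {a q p c : Fin n} (ha : a ∈ S) (hq : q ∈ S) (haq : a ≤ q) (hp : p ∈ T)
    (hc : c ∈ T) (hpc : p ≤ c) (hqp : q < p) : boxHi b x (Icc a q) < boxLo b x (Icc p c) :=
  hD.2.2.2.2.2 S hS T hT (hD.isIntervalPartition.forall_lt_of_lt hS hT hST hq hp hqp) _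
    (hD.wellContained hS a ha q hq haq (Set.right_mem_Icc.2 (boxLo_le_boxHi hb _))) _
    (hD.wellContained hT p hp c hc hpc (Set.left_mem_Icc.2 (boxLo_le_boxHi hb _)))

theorem exists_two_mul_card_mul_lt (hb : 0 ≤ b) (hD : IsBoxDecomp b x D) (hS : S ∈ D)
    (hT : T ∈ D) (hST : S ≠ T) {a c : Fin n} (ha : a ∈ S) (hc : c ∈ T) (hac : a < c) :
    ∃ q p, a ≤ q ∧ q < p ∧ p ≤ c ∧ q ∈ S ∧ p ∈ T ∧
      2 * #(Icc a c) * b < boxHi b x (Icc p c) - boxLo b x (Icc a q) := by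
  have hP := hD.isIntervalPartition
  refine hP.induction_on_covBy (P := fun S T => ∀ a ∈ S, ∀ c ∈ T, ∃ q p, a ≤ q ∧ q < p ∧ p ≤ c ∧
    q ∈ S ∧ p ∈ T ∧ 2 * #(Icc a c) * b < boxHi b x (Icc p c) - boxLo b x (Icc a q))
    ?_ ?_ hS hT hST ha hc hac a ha c hc
  · intro S hS T hT hST i hi j hj hij a ha c hc
    have hlt := hP.forall_lt_of_lt hS hT hST hi hj hij.lt
    have hai := hij.le_of_lt (hlt a ha j hj)
    have hjc := hij.ge_of_gt (hlt i hi c hc)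
    exact ⟨i, j, hai, hij.lt, hjc, hi, hj, two_mul_card_mul_lt_of_covBy hai hij hjc
      (boxHi_sub_boxLo b x _).ge
      (hD.boxHi_Icc_lt_boxLo_Icc hb hS hT hST ha hi hai hj hc hjc hij.lt)⟩
  · intro S hS U hU T hT hSU hUT i hi j hj hij a ha c hc
    have hjc := hij.ge_of_gt (hP.forall_lt_of_lt hU hT hUT hi hj hij.lt i hi c hc)
    obtain ⟨q, p, haq, hqp, hpi, hq, hp, hlt⟩ := hSU a ha i hi
    exact ⟨q, j, haq, (hqp.trans_le hpi).trans hij.lt, hjc, hq, hj,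
      two_mul_card_mul_lt_of_covBy (haq.trans (hqp.le.trans hpi)) hij hjc hlt.le
        (hD.boxHi_Icc_lt_boxLo_Icc hb hU hT hUT hp hi hpi hj hc hjc hij.lt)⟩

theorem exists_superset (hb : 0 ≤ b) (hD : IsBoxDecomp b x D) {J : Finset (Fin n)}
    (hJ : J.Nonempty) (hJc : (J : Set (Fin n)).OrdConnected) (hwc : WellContained b x J) :
    ∃ S ∈ D, J ⊆ S := by
  obtain ⟨a, c, hac, rfl⟩ : ∃ a c, a ≤ c ∧ J = Icc a c :=
    ⟨_, _, J.min'_le _ (J.max'_mem hJ), eq_Icc_min'_max' hJc hJ⟩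
  have hP := hD.isIntervalPartition
  obtain ⟨S, ⟨hS, haS⟩, -⟩ := hD.2.1 a
  obtain ⟨T, ⟨hT, hcT⟩, -⟩ := hD.2.1 c
  by_cases hST : S = T
  · subst hST
    exact ⟨S, hS, Icc_subset_of_ordConnected (hP.ordConnected S hS) haS hcT⟩
  exfalso
  have hac' : a < c := hac.lt_of_ne fun h => hST (hP.eq_of_mem hS hT haS (h ▸ hcT))
  obtain ⟨q, p, haq, hqp, hpc, -, -, hlt⟩ := hD.exists_two_mul_card_mul_lt hb hS hT hST haS hcT hac'
  have hlo := ((bbox_subset_bbox_iff hb).1 (hwc a (left_mem_Icc.2 hac) q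
    (mem_Icc.2 ⟨haq, (hqp.trans_le hpc).le⟩) haq)).1
  have hhi := ((bbox_subset_bbox_iff hb).1 (hwc p (mem_Icc.2 ⟨haq.trans hqp.le, hpc⟩) c
    (right_mem_Icc.2 hac) hpc)).2
  linarith [boxHi_sub_boxLo b x (Icc a c)]

theorem subset (hb : 0 ≤ b) (hD : IsBoxDecomp b x D) (hD' : IsBoxDecomp b x D') : D' ⊆ D :=
  hD'.isIntervalPartition.subset_of_forall_exists_subset
    (fun T hT => hD.exists_superset hb (hD'.1 T hT) (hD'.isIntervalPartition.ordConnected T hT)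
      (hD'.wellContained hT))
    (fun S hS => hD'.exists_superset hb (hD.1 S hS) (hD.isIntervalPartition.ordConnected S hS)
      (hD.wellContained hS))

end IsBoxDecomp

end Decomposition

/-- Every finite multiset of points in `ℝ` (sorted as a monotone tuple) has a unique box
decomposition. -/
theorem box_decomposition_exists_unique {n : ℕ} (b : ℝ) (hb : 0 < b)
    (x : Fin n → ℝ) (hx : Monotone x) :
    ∃! D : Finset (Finset (Fin n)), IsBoxDecomp b x D := by
  obtain ⟨D, hD⟩ := exists_isBoxDecomp hb.le hx
  exact ⟨D, hD, fun D' hD' => (hD.subset hb.le hD').antisymm (hD'.subset hb.le hD)⟩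
end

section
/- Fix b > 0 and real numbers −1 ≤ a₀ < a₁ < ... < a_n ≤ 1 with a_{i+1} − a_i > 2b. For 0 ≤ k ≤ n, let U_{k,n−k} be the set of multisets z of n points in ℝ such that, in the box decomposition of z, the point a_k is not covered by any box, and exactly k points of z lie to the left of a_k. Then the sets U_{n,0}, U_{n−1,1}, ..., U_{0,n} cover Sym^n(ℝ) (the space of n-point multisets in ℝ). -/
/-!
Fix one box decomposition `D`. A box of `|S|` points has length `2|S|b` while consecutive
stops `a i` are more than `2b` apart, so it covers at most `|S|` stops. Hence some stop is
uncovered, and the stops strictly between two consecutive uncovered stops `a l < a m` are covered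
by boxes lying in `(a l, a m)`, which hold at least `m - l - 1` points. Writing `c k` for the
number of points left of `a k`, the quantity `c k - k` is therefore `≥ 0` at the first uncovered
stop, `≤ 0` at the last one, and drops by at most one between consecutive uncovered stops, so it
vanishes at one of them.

The choice of `D` does not matter: merging a block with the block after it moves the left end of
the box strictly to the right, so a run of points whose initial runs have boxes inside its own box
lies in a single block of `D`. Hence every box of any box decomposition lies in a box of `D`.
-/

open Finset

noncomputable def boxLeft {n : ℕ} (b : ℝ) (x : Fin n → ℝ) (S : Finset (Fin n)) : ℝ :=
  bmean x S - S.card * b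

noncomputable def boxRight {n : ℕ} (b : ℝ) (x : Fin n → ℝ) (S : Finset (Fin n)) : ℝ :=
  bmean x S + S.card * b

section Boxes

variable {n : ℕ} {b : ℝ} {x : Fin n → ℝ}

theorem boxLeft_le_boxRight (hb : 0 ≤ b) (S : Finset (Fin n)) :
    boxLeft b x S ≤ boxRight b x S := by
  have : 0 ≤ (S.card : ℝ) * b := by positivity
  unfold boxLeft boxRight
  linarith

theorem bbox_subset_bbox_iff_s15 (hb : 0 ≤ b) {S T : Finset (Fin n)} :
    bbox b x T ⊆ bbox b x S ↔ boxLeft b x S ≤ boxLeft b x T ∧ boxRight b x T ≤ boxRight b x S :=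
  Set.Icc_subset_Icc_iff (boxLeft_le_boxRight hb T)

theorem card_mul_bmean (x : Fin n → ℝ) (S : Finset (Fin n)) :
    (S.card : ℝ) * bmean x S = ∑ i ∈ S, x i := by
  rcases S.eq_empty_or_nonempty with rfl | hS
  · simp
  · exact mul_div_cancel₀ _ (by exact_mod_cast hS.card_pos.ne')

theorem boxLeft_lt_boxLeft_union {A C : Finset (Fin n)} (hAC : Disjoint A C) (hC : C.Nonempty)
    (h : boxRight b x A < boxLeft b x C) : boxLeft b x A < boxLeft b x (A ∪ C) := by
  unfold boxLeft boxRight at *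
  have hs : (0 : ℝ) ≤ A.card := by positivity
  have ht : (0 : ℝ) < C.card := by exact_mod_cast hC.card_pos
  have hmean : ((A.card : ℝ) + C.card) * bmean x (A ∪ C)
      = A.card * bmean x A + C.card * bmean x C := by
    have h := card_mul_bmean x (A ∪ C)
    rw [card_union_of_disjoint hAC, sum_union hAC, ← card_mul_bmean, ← card_mul_bmean] at h
    exact_mod_cast h
  rw [card_union_of_disjoint hAC]
  push_cast
  -- `(|A| + |C|) (boxLeft (A ∪ C) - boxLeft A) = |C| (bmean C - bmean A - (|A| + |C|) b)`
  have key : 0 < (C.card : ℝ) * (bmean x C - bmean x A - (A.card + C.card) * b) :=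
    mul_pos ht (by linarith)
  refine lt_of_mul_lt_mul_left ?_ (add_pos_of_nonneg_of_pos hs ht).le
  nlinarith

end Boxes

section Stops

variable {n : ℕ} {b : ℝ} {a : ℕ → ℝ}

theorem add_two_mul_sub_lt_of_gap (hgap : ∀ i < n, a i + 2 * b < a (i + 1)) {i j : ℕ}
    (hij : i < j) (hjn : j ≤ n) : a i + 2 * b * ((j : ℝ) - i) < a j := by
  induction j, hij using Nat.le_induction with
  | base =>
    push_cast
    linarith [hgap i (by omega)]
  | succ j hij ih =>
    have := hgap j (by omega)
    push_cast
    linarith [ih (by omega)]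

theorem lt_of_gap (hb : 0 ≤ b) (hgap : ∀ i < n, a i + 2 * b < a (i + 1)) {i j : ℕ}
    (hij : i < j) (hjn : j ≤ n) : a i < a j := by
  have hij' : (i : ℝ) ≤ j := by exact_mod_cast hij.le
  nlinarith [add_two_mul_sub_lt_of_gap hgap hij hjn, mul_nonneg hb (sub_nonneg.2 hij')]

theorem card_filter_mem_Icc_le (hb : 0 ≤ b) (hgap : ∀ i < n, a i + 2 * b < a (i + 1))
    {l u : ℝ} {m : ℕ} (hm : 0 < m) (hlu : u - l ≤ 2 * b * m) :
    #{t ∈ range (n + 1) | a t ∈ Set.Icc l u} ≤ m := by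
  set F := {t ∈ range (n + 1) | a t ∈ Set.Icc l u}
  rcases F.eq_empty_or_nonempty with hF | hF
  · simp [hF]
  obtain ⟨ht₀n, ht₀⟩ := mem_filter.1 (F.min'_mem hF)
  set t₀ := F.min' hF
  calc #F ≤ #(Ico t₀ (t₀ + m)) := card_le_card fun t ht => by
          obtain ⟨htn, hat⟩ := mem_filter.1 ht
          refine mem_Ico.2 ⟨F.min'_le t ht, ?_⟩
          by_contra! hlt
          have hgap' := add_two_mul_sub_lt_of_gap hgap (i := t₀) (by omega)
            (Nat.lt_succ_iff.1 (mem_range.1 htn))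
          have : (m : ℝ) ≤ t - t₀ := by
            have : ((t₀ + m : ℕ) : ℝ) ≤ t := by exact_mod_cast hlt
            push_cast at this
            linarith
          have := mul_le_mul_of_nonneg_left this (by positivity : (0 : ℝ) ≤ 2 * b)
          linarith [hat.2, ht₀.1]
    _ = m := by simp

end Stops

theorem Set.Icc_subset_Iio_of_mem_of_notMem {α : Type*} [LinearOrder α] {l u y z : α}
    (hz : z ∈ Set.Icc l u) (hy : y ∉ Set.Icc l u) (hzy : z < y) : Set.Icc l u ⊆ Set.Iio y :=
  (Set.Icc_subset_Iio_iff (hz.1.trans hz.2)).2 <|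
    lt_of_not_ge fun hyu => hy ⟨hz.1.trans hzy.le, hyu⟩

theorem Set.Icc_subset_Ioi_of_mem_of_notMem {α : Type*} [LinearOrder α] {l u y z : α}
    (hz : z ∈ Set.Icc l u) (hy : y ∉ Set.Icc l u) (hyz : y < z) : Set.Icc l u ⊆ Set.Ioi y :=
  (Set.Icc_subset_Ioi_iff (hz.1.trans hz.2)).2 <|
    lt_of_not_ge fun hly => hy ⟨hly, hyz.le.trans hz.2⟩

namespace IsBoxDecomp

variable {n : ℕ} {b : ℝ} {x : Fin n → ℝ} {D : Finset (Finset (Fin n))}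

theorem nonempty (hD : IsBoxDecomp b x D) {S : Finset (Fin n)} (hS : S ∈ D) : S.Nonempty :=
  hD.1 S hS

theorem exists_mem (hD : IsBoxDecomp b x D) (i : Fin n) : ∃ S ∈ D, i ∈ S := by
  obtain ⟨S, ⟨hS, hi⟩, -⟩ := hD.2.1 i
  exact ⟨S, hS, hi⟩

theorem eq_of_mem (hD : IsBoxDecomp b x D) {S T : Finset (Fin n)} {i : Fin n} (hS : S ∈ D)
    (hT : T ∈ D) (hiS : i ∈ S) (hiT : i ∈ T) : S = T :=
  (hD.2.1 i).unique ⟨hS, hiS⟩ ⟨hT, hiT⟩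

theorem mem_of_le_of_le (hD : IsBoxDecomp b x D) {S : Finset (Fin n)} (hS : S ∈ D)
    {i j k : Fin n} (hi : i ∈ S) (hk : k ∈ S) (hij : i ≤ j) (hjk : j ≤ k) : j ∈ S :=
  hD.2.2.1 S hS i hi k hk j hij hjk

theorem bbox_Icc_subset (hD : IsBoxDecomp b x D) {S : Finset (Fin n)} (hS : S ∈ D)
    {i k : Fin n} (hi : i ∈ S) (hk : k ∈ S) (hik : i ≤ k) : bbox b x (Icc i k) ⊆ bbox b x S :=
  hD.2.2.2.1 S hS i hi k hk hik

theorem mem_bbox (hb : 0 ≤ b) (hD : IsBoxDecomp b x D) {S : Finset (Fin n)} (hS : S ∈ D)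
    {i : Fin n} (hi : i ∈ S) : x i ∈ bbox b x S :=
  hD.bbox_Icc_subset hS hi hi le_rfl <| by
    simp only [bbox, bmean, Icc_self, sum_singleton, card_singleton, Nat.cast_one, div_one,
      one_mul, Set.mem_Icc]
    constructor <;> linarith

theorem exists_eq_Icc (hD : IsBoxDecomp b x D) {S : Finset (Fin n)} (hS : S ∈ D) :
    ∃ p q, p ≤ q ∧ S = Icc p q := by
  have hne := hD.nonempty hS
  refine ⟨S.min' hne, S.max' hne, S.min'_le _ (S.max'_mem hne), ?_⟩
  ext t
  rw [mem_Icc]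
  exact ⟨fun ht => ⟨S.min'_le t ht, S.le_max' t ht⟩, fun ⟨h₁, h₂⟩ =>
    hD.mem_of_le_of_le hS (S.min'_mem hne) (S.max'_mem hne) h₁ h₂⟩

theorem forall_lt_of_lt (hD : IsBoxDecomp b x D) {S T : Finset (Fin n)} (hS : S ∈ D)
    (hT : T ∈ D) (hST : S ≠ T) {i j : Fin n} (hi : i ∈ S) (hj : j ∈ T) (hij : i < j) :
    ∀ i' ∈ S, ∀ j' ∈ T, i' < j' := by
  intro i' hi' j' hj'
  by_contra! hji
  have hi'j : i' < j := lt_of_not_ge fun hji' =>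
    hST (hD.eq_of_mem hS hT (hD.mem_of_le_of_le hS hi hi' hij.le hji') hj)
  exact hST (hD.eq_of_mem hS hT hi' (hD.mem_of_le_of_le hT hj' hj hji hi'j.le))

theorem boxRight_lt_boxLeft (hb : 0 ≤ b) (hD : IsBoxDecomp b x D) {S T : Finset (Fin n)}
    (hS : S ∈ D) (hT : T ∈ D) (h : ∀ i ∈ S, ∀ j ∈ T, i < j) : boxRight b x S < boxLeft b x T :=
  hD.2.2.2.2.2 S hS T hT h _ ⟨boxLeft_le_boxRight hb S, le_rfl⟩ _
    ⟨le_rfl, boxLeft_le_boxRight hb T⟩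

/-- The hypothesis `hright` is what `boxLeft_le_boxLeft_Icc` proves; inside its own proof it is
supplied by induction. -/
theorem boxLeft_Icc_lt_boxLeft_Icc (hb : 0 ≤ b) (hD : IsBoxDecomp b x D) {S : Finset (Fin n)}
    (hS : S ∈ D) {u e q : Fin n} (hu : u ∈ S) (he : e ∈ S) (hSe : ∀ i ∈ S, i ≤ e) (heq : e < q)
    (hright : ∀ T ∈ D, ∀ v ∈ T, e < v → v ≤ q → boxLeft b x T ≤ boxLeft b x (Icc v q)) :
    boxLeft b x (Icc u e) < boxLeft b x (Icc u q) := by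
  have hR : (Ioc e q).Nonempty := ⟨q, mem_Ioc.2 ⟨heq, le_rfl⟩⟩
  obtain ⟨hev, hvq⟩ := mem_Ioc.1 ((Ioc e q).min'_mem hR)
  set v := (Ioc e q).min' hR
  have hIoc : Ioc e q = Icc v q := by
    ext t
    simp only [mem_Ioc, mem_Icc]
    exact ⟨fun ht => ⟨(Ioc e q).min'_le t (mem_Ioc.2 ht), ht.2⟩,
      fun ht => ⟨hev.trans_le ht.1, ht.2⟩⟩
  obtain ⟨T, hT, hvT⟩ := hD.exists_mem v
  have hST : S ≠ T := by
    rintro rfl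
    exact (hSe v hvT).not_gt hev
  have hsplit : Icc u q = Icc u e ∪ Ioc e q := by
    rw [← coe_inj, coe_union, coe_Icc, coe_Icc, coe_Ioc,
      Set.Icc_union_Ioc_eq_Icc (hSe u hu) heq.le]
  have hdisj : Disjoint (Icc u e) (Ioc e q) :=
    disjoint_left.2 fun t ht ht' => (mem_Ioc.1 ht').1.not_ge (mem_Icc.1 ht).2
  rw [hsplit]
  refine boxLeft_lt_boxLeft_union hdisj hR ?_
  calc boxRight b x (Icc u e) ≤ boxRight b x S :=
        ((bbox_subset_bbox_iff_s15 hb).1 (hD.bbox_Icc_subset hS hu he (hSe u hu))).2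
    _ < boxLeft b x T :=
        hD.boxRight_lt_boxLeft hb hS hT (hD.forall_lt_of_lt hS hT hST he hvT hev)
    _ ≤ boxLeft b x (Ioc e q) := hIoc ▸ hright T hT v hvT hev hvq

theorem boxLeft_le_boxLeft_Icc (hb : 0 ≤ b) (hD : IsBoxDecomp b x D) {S : Finset (Fin n)}
    (hS : S ∈ D) {u q : Fin n} (hu : u ∈ S) (huq : u ≤ q) :
    boxLeft b x S ≤ boxLeft b x (Icc u q) := by
  induction hd : (q : ℕ) - u using Nat.strong_induction_on generalizing u S with
  | _ d ih =>
  have hne := hD.nonempty hS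
  rcases le_or_gt q (S.max' hne) with hqe | heq
  · exact ((bbox_subset_bbox_iff_s15 hb).1 (hD.bbox_Icc_subset hS hu
      (hD.mem_of_le_of_le hS hu (S.max'_mem hne) huq hqe) huq)).1
  have hue : u ≤ S.max' hne := S.le_max' u hu
  calc boxLeft b x S ≤ boxLeft b x (Icc u (S.max' hne)) :=
        ((bbox_subset_bbox_iff_s15 hb).1 (hD.bbox_Icc_subset hS hu (S.max'_mem hne) hue)).1
    _ ≤ boxLeft b x (Icc u q) := by
        refine (hD.boxLeft_Icc_lt_boxLeft_Icc hb hS hu (S.max'_mem hne) (S.le_max' ·)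
          heq fun T hT v hvT hev hvq => ih _ ?_ hT hvT hvq rfl).le
        have := Fin.lt_def.1 (hue.trans_lt hev)
        have := Fin.le_def.1 hvq
        omega

theorem exists_Icc_subset (hb : 0 ≤ b) (hD : IsBoxDecomp b x D) {p q : Fin n}
    (hW : ∀ e, p ≤ e → e ≤ q → bbox b x (Icc p e) ⊆ bbox b x (Icc p q)) :
    ∃ S ∈ D, Icc p q ⊆ S := by
  obtain ⟨S, hS, hp⟩ := hD.exists_mem p
  have hne := hD.nonempty hS
  have hq : q ≤ S.max' hne := by
    by_contra! heq
    have hlt := hD.boxLeft_Icc_lt_boxLeft_Icc hb hS hp (S.max'_mem hne) (S.le_max' ·) heq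
      fun T hT v hvT _ hvq => hD.boxLeft_le_boxLeft_Icc hb hT hvT hvq
    have hle := ((bbox_subset_bbox_iff_s15 hb).1 (hW _ (S.le_max' p hp) heq.le)).1
    exact hlt.not_ge hle
  exact ⟨S, hS, fun t ht => hD.mem_of_le_of_le hS hp (S.max'_mem hne) (mem_Icc.1 ht).1
    ((mem_Icc.1 ht).2.trans hq)⟩

theorem exists_bbox_subset_bbox (hb : 0 ≤ b) (hD : IsBoxDecomp b x D)
    {D' : Finset (Finset (Fin n))} (hD' : IsBoxDecomp b x D') {S : Finset (Fin n)}
    (hS : S ∈ D') : ∃ S₀ ∈ D, bbox b x S ⊆ bbox b x S₀ := by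
  obtain ⟨p, q, hpq, rfl⟩ := hD'.exists_eq_Icc hS
  obtain ⟨S₀, hS₀, hsub⟩ := hD.exists_Icc_subset hb fun e hpe heq =>
    hD'.bbox_Icc_subset hS (left_mem_Icc.2 hpq) (mem_Icc.2 ⟨hpe, heq⟩) hpe
  exact ⟨S₀, hS₀, hD.bbox_Icc_subset hS₀ (hsub (left_mem_Icc.2 hpq))
    (hsub (right_mem_Icc.2 hpq)) hpq⟩

end IsBoxDecomp

section Counting

variable {n : ℕ} {b : ℝ} {a : ℕ → ℝ} {x : Fin n → ℝ} {D : Finset (Finset (Fin n))}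

/-- A box covers at most as many stops as it holds points. -/
theorem card_le_card_filter_of_covered (hb : 0 ≤ b) (hgap : ∀ i < n, a i + 2 * b < a (i + 1))
    (hD : IsBoxDecomp b x D) {J : Finset ℕ} (hJ : J ⊆ range (n + 1)) (P : ℝ → Prop)
    [DecidablePred P] (hcov : ∀ t ∈ J, ∃ S ∈ D, a t ∈ bbox b x S ∧ ∀ y ∈ bbox b x S, P y) :
    #J ≤ #{i | P (x i)} := by
  classical
  set T := {S ∈ D | ∀ y ∈ bbox b x S, P y}
  have hdisj : (T : Set (Finset (Fin n))).PairwiseDisjoint id := fun S hS S' hS' hne =>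
    disjoint_left.2 fun i hi hi' =>
      hne (hD.eq_of_mem (mem_filter.1 hS).1 (mem_filter.1 hS').1 hi hi')
  calc #J ≤ #(T.biUnion fun S =>
          {t ∈ range (n + 1) | a t ∈ Set.Icc (boxLeft b x S) (boxRight b x S)}) :=
        card_le_card fun t ht => by
          obtain ⟨S, hS, hat, hP⟩ := hcov t ht
          exact mem_biUnion.2 ⟨S, mem_filter.2 ⟨hS, hP⟩, mem_filter.2 ⟨hJ ht, hat⟩⟩
    _ ≤ ∑ S ∈ T, #{t ∈ range (n + 1) | a t ∈ Set.Icc (boxLeft b x S) (boxRight b x S)} :=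
        card_biUnion_le
    _ ≤ ∑ S ∈ T, #S := sum_le_sum fun S hS =>
        card_filter_mem_Icc_le hb hgap (hD.nonempty (mem_filter.1 hS).1).card_pos
          (by unfold boxLeft boxRight; linarith)
    _ = #(T.biUnion id) := (card_biUnion hdisj).symm
    _ ≤ #{i | P (x i)} := card_le_card fun i hi => by
        obtain ⟨S, hS, hiS⟩ := mem_biUnion.1 hi
        obtain ⟨hSD, hP⟩ := mem_filter.1 hS
        exact mem_filter.2 ⟨mem_univ i, hP _ (hD.mem_bbox hb hSD hiS)⟩

theorem exists_le_forall_notMem_bbox (hb : 0 ≤ b) (hgap : ∀ i < n, a i + 2 * b < a (i + 1))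
    (hD : IsBoxDecomp b x D) : ∃ k ≤ n, ∀ S ∈ D, a k ∉ bbox b x S := by
  by_contra! hcov
  have h := card_le_card_filter_of_covered hb hgap hD subset_rfl (fun _ => True)
    fun t ht => (hcov t (Nat.lt_succ_iff.1 (mem_range.1 ht))).imp fun _ h => ⟨h.1, h.2, by simp⟩
  simp only [card_range, filter_true, card_univ, Fintype.card_fin] at h
  omega

theorem le_card_filter_lt (hb : 0 ≤ b) (hgap : ∀ i < n, a i + 2 * b < a (i + 1))
    (hD : IsBoxDecomp b x D) {m : ℕ} (hm : m ≤ n) (hmD : ∀ S ∈ D, a m ∉ bbox b x S)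
    (hcov : ∀ t < m, ∃ S ∈ D, a t ∈ bbox b x S) : m ≤ #{i | x i < a m} := by
  have h := card_le_card_filter_of_covered hb hgap hD (J := range m)
    (range_subset_range.2 (by omega)) (· < a m) fun t ht => by
      obtain ⟨S, hS, hat⟩ := hcov t (mem_range.1 ht)
      exact ⟨S, hS, hat, Set.Icc_subset_Iio_of_mem_of_notMem hat (hmD S hS)
        (lt_of_gap hb hgap (mem_range.1 ht) hm)⟩
  rwa [card_range] at h

theorem card_filter_lt_add_le (hb : 0 ≤ b) (hgap : ∀ i < n, a i + 2 * b < a (i + 1))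
    (hD : IsBoxDecomp b x D) {l m : ℕ} (hlm : l < m) (hm : m ≤ n)
    (hlD : ∀ S ∈ D, a l ∉ bbox b x S) (hmD : ∀ S ∈ D, a m ∉ bbox b x S)
    (hcov : ∀ t ∈ Ioo l m, ∃ S ∈ D, a t ∈ bbox b x S) :
    #{i | x i < a l} + (m - l - 1) ≤ #{i | x i < a m} := by
  have h := card_le_card_filter_of_covered hb hgap hD (J := Ioo l m)
    (fun t ht => mem_range.2 (by have := mem_Ioo.1 ht; omega)) (fun y => a l < y ∧ y < a m)
    fun t ht => by
      obtain ⟨hlt, htm⟩ := mem_Ioo.1 ht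
      obtain ⟨S, hS, hat⟩ := hcov t ht
      exact ⟨S, hS, hat, fun y hy =>
        ⟨Set.Icc_subset_Ioi_of_mem_of_notMem hat (hlD S hS) (lt_of_gap hb hgap hlt (by omega)) hy,
          Set.Icc_subset_Iio_of_mem_of_notMem hat (hmD S hS) (lt_of_gap hb hgap htm hm) hy⟩⟩
  rw [Nat.card_Ioo] at h
  set L : Finset (Fin n) := {i | x i < a l}
  set B : Finset (Fin n) := {i | a l < x i ∧ x i < a m}
  have hdisj : Disjoint L B := disjoint_filter.2 fun i _ h₁ h₂ => h₁.not_gt h₂.1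
  have hsub : L ∪ B ⊆ ({i | x i < a m} : Finset (Fin n)) := by
    intro i hi
    simp only [L, B, mem_union, mem_filter, mem_univ, true_and] at hi ⊢
    rcases hi with hi | hi
    exacts [hi.trans (lt_of_gap hb hgap hlm hm), hi.2]
  have := card_le_card hsub
  rw [card_union_of_disjoint hdisj] at this
  omega

theorem card_filter_lt_le (hb : 0 ≤ b) (hgap : ∀ i < n, a i + 2 * b < a (i + 1))
    (hD : IsBoxDecomp b x D) {k : ℕ} (hk : k ≤ n) (hkD : ∀ S ∈ D, a k ∉ bbox b x S)
    (hcov : ∀ t ∈ Ioc k n, ∃ S ∈ D, a t ∈ bbox b x S) : #{i | x i < a k} ≤ k := by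
  have h := card_le_card_filter_of_covered hb hgap hD (J := Ioc k n)
    (fun t ht => mem_range.2 (by have := mem_Ioc.1 ht; omega)) (a k < ·) fun t ht => by
      obtain ⟨S, hS, hat⟩ := hcov t ht
      exact ⟨S, hS, hat, Set.Icc_subset_Ioi_of_mem_of_notMem hat (hkD S hS)
        (lt_of_gap hb hgap (mem_Ioc.1 ht).1 (mem_Ioc.1 ht).2)⟩
  rw [Nat.card_Ioc] at h
  have hsplit := card_filter_add_card_filter_not (s := univ) fun i => x i < a k
  have hgt : #{i | a k < x i} ≤ #{i | ¬x i < a k} :=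
    card_le_card (monotone_filter_right _ fun i _ hi => not_lt.2 hi.le)
  rw [card_univ, Fintype.card_fin] at hsplit
  omega

end Counting

/-- A discrete intermediate value theorem for `c k - k` on `U`. -/
theorem exists_mem_eq_of_consecutive_le {U : Finset ℕ} {c : ℕ → ℕ} (hU : U.Nonempty)
    (hfirst : ∀ m ∈ U, (∀ t ∈ U, m ≤ t) → m ≤ c m)
    (hstep : ∀ l ∈ U, ∀ m ∈ U, l < m → (∀ t ∈ U, t ≤ l ∨ m ≤ t) → c l + (m - l - 1) ≤ c m)
    (hlast : ∀ k ∈ U, (∀ t ∈ U, t ≤ k) → c k ≤ k) : ∃ k ∈ U, c k = k := by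
  classical
  set K := {k ∈ U | k ≤ c k}
  have hK : K.Nonempty := ⟨U.min' hU, mem_filter.2 ⟨U.min'_mem hU,
    hfirst _ (U.min'_mem hU) fun t ht => U.min'_le t ht⟩⟩
  obtain ⟨hkU, hkc⟩ := mem_filter.1 (K.max'_mem hK)
  set k := K.max' hK
  refine ⟨k, hkU, le_antisymm ?_ hkc⟩
  by_contra! hck
  have hM : {t ∈ U | k < t}.Nonempty := by
    by_contra! hM
    exact hck.not_ge (hlast k hkU fun t ht => not_lt.1 fun hkt =>
      (filter_nonempty_iff.2 ⟨t, ht, hkt⟩).ne_empty hM)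
  obtain ⟨hmU, hkm⟩ := mem_filter.1 (min'_mem _ hM)
  set m := min' _ hM
  have hcons : ∀ t ∈ U, t ≤ k ∨ m ≤ t := fun t ht =>
    (le_or_gt t k).imp_right fun hkt => min'_le _ t (mem_filter.2 ⟨ht, hkt⟩)
  have := hstep k hkU m hmU hkm hcons
  exact (K.le_max' m (mem_filter.2 ⟨hmU, by omega⟩)).not_gt hkm

theorem IsBoxDecomp.exists_forall_notMem_bbox_card_filter_lt_eq {n : ℕ} {b : ℝ} {a : ℕ → ℝ}
    {x : Fin n → ℝ} {D : Finset (Finset (Fin n))} (hb : 0 ≤ b)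
    (hgap : ∀ i < n, a i + 2 * b < a (i + 1)) (hD : IsBoxDecomp b x D) :
    ∃ k ≤ n, (∀ S ∈ D, a k ∉ bbox b x S) ∧ #{i | x i < a k} = k := by
  classical
  set U := {k ∈ range (n + 1) | ∀ S ∈ D, a k ∉ bbox b x S}
  have hmem : ∀ {k}, k ∈ U ↔ k ≤ n ∧ ∀ S ∈ D, a k ∉ bbox b x S := by
    simp [U]
  have hcov : ∀ t ≤ n, t ∉ U → ∃ S ∈ D, a t ∈ bbox b x S := by
    intro t ht htU
    simpa [hmem, ht] using htU
  have hU : U.Nonempty := by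
    obtain ⟨k, hk, hkD⟩ := exists_le_forall_notMem_bbox hb hgap hD
    exact ⟨k, hmem.2 ⟨hk, hkD⟩⟩
  obtain ⟨k, hkU, hk⟩ := exists_mem_eq_of_consecutive_le (c := fun k => #{i | x i < a k}) hU
    (fun m hm hmin => le_card_filter_lt hb hgap hD (hmem.1 hm).1 (hmem.1 hm).2
      fun t htm => hcov t (by have := (hmem.1 hm).1; omega) fun ht => (hmin t ht).not_gt htm)
    (fun l hl m hm hlm hcons => card_filter_lt_add_le hb hgap hD hlm (hmem.1 hm).1
      (hmem.1 hl).2 (hmem.1 hm).2 fun t ht => by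
        obtain ⟨hlt, htm⟩ := mem_Ioo.1 ht
        refine hcov t (by have := (hmem.1 hm).1; omega) fun htU => ?_
        rcases hcons t htU with h | h <;> omega)
    (fun k hk hmax => card_filter_lt_le hb hgap hD (hmem.1 hk).1 (hmem.1 hk).2
      fun t ht => hcov t (mem_Ioc.1 ht).2 fun htU => (hmax t htU).not_gt (mem_Ioc.1 ht).1)
  exact ⟨k, (hmem.1 hkU).1, (hmem.1 hkU).2, hk⟩

theorem box_opens_cover_general {n : ℕ} (b : ℝ) (hb : 0 < b) (a : ℕ → ℝ)
    (hgap : ∀ i, i < n → a i + 2 * b < a (i + 1))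
    (x : Fin n → ℝ) :
    ∃ k ≤ n, ∀ D : Finset (Finset (Fin n)), IsBoxDecomp b x D →
      (∀ S ∈ D, a k ∉ bbox b x S) ∧
      (Finset.univ.filter fun i => x i < a k).card = k := by
  by_cases hex : ∃ D₀, IsBoxDecomp b x D₀
  · obtain ⟨D₀, hD₀⟩ := hex
    obtain ⟨k, hkn, hunc, hcard⟩ :=
      hD₀.exists_forall_notMem_bbox_card_filter_lt_eq hb.le hgap
    refine ⟨k, hkn, fun D hD => ⟨fun S hS hk => ?_, hcard⟩⟩
    obtain ⟨S₀, hS₀, hsub⟩ := hD₀.exists_bbox_subset_bbox hb.le hD hS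
    exact hunc S₀ hS₀ (hsub hk)
  · exact ⟨0, n.zero_le, fun D hD => (hex ⟨D, hD⟩).elim⟩

/-- The covering lemma: for stop points `-1 ≤ a 0 < a 1 < ... < a n ≤ 1` with gaps `> 2b`,
every `n`-point multiset in `ℝ` (sorted as a monotone tuple `x`) lies in some `U_{k,n-k}`:
there is `k ≤ n` such that `a k` is not covered by any box of the box decomposition of `x`
and exactly `k` of the points lie to the left of `a k`. -/
theorem box_opens_cover {n : ℕ} (b : ℝ) (hb : 0 < b) (a : ℕ → ℝ)
    (ha0 : -1 ≤ a 0) (han : a n ≤ 1)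
    (hgap : ∀ i, i < n → a i + 2 * b < a (i + 1))
    (x : Fin n → ℝ) (hx : Monotone x) :
    ∃ k ≤ n, ∀ D : Finset (Finset (Fin n)), IsBoxDecomp b x D →
      (∀ S ∈ D, a k ∉ bbox b x S) ∧
      (Finset.univ.filter fun i => x i < a k).card = k :=
  box_opens_cover_general b hb a hgap x
end

section
/- The inclusion U_{n_L',(m_i')_i,n_R'} ⊆ U_{n_L,(m_i)_i,n_R} holds if and only if the ordered partition n = n_L' + m₁' + ... + n_R' refines the ordered partition n = n_L + m₁ + ... + n_R, i.e. {n_L, n_L+m₁, ...} ⊆ {n_L', n_L'+m₁', ...}. -/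
/-- `x ∈ U_{k, n-k}`: the stop `a k` is uncovered by the box decomposition of `x`, and
exactly `k` points lie to its left. -/
def memU {n : ℕ} (b : ℝ) (a : ℕ → ℝ) (x : Fin n → ℝ) (k : ℕ) : Prop :=
  ∀ D : Finset (Finset (Fin n)), IsBoxDecomp b x D →
    (∀ S ∈ D, a k ∉ bbox b x S) ∧
    (Finset.univ.filter fun i => x i < a k).card = k

/-- `x ∈ U_{nL, (m 1, ..., m s), nR}`: the condition of `memU` holds at every partial sum
`nL + m 1 + ... + m j`, `0 ≤ j ≤ s`. -/
def memUPart {n : ℕ} (b : ℝ) (a : ℕ → ℝ) (x : Fin n → ℝ)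
    (nL : ℕ) (m : ℕ → ℕ) (s : ℕ) : Prop :=
  ∀ j ≤ s, memU b a x (nL + ∑ i ∈ Finset.range j, m (i + 1))

-- auxiliary lemmas

lemma bbox_singleton {n : ℕ} (b : ℝ) (x : Fin n → ℝ) (i : Fin n) :
    bbox b x {i} = Set.Icc (x i - b) (x i + b) := by
  simp [bbox, bmean]

lemma a_lt {n : ℕ} {b : ℝ} {a : ℕ → ℝ} (hb : 0 < b)
    (hgap : ∀ i, i < n → a i + 2 * b < a (i + 1)) :
    ∀ i j, i < j → j ≤ n → a i + 2 * b < a j := by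
  intro i j hij hjn
  induction j with
  | zero => omega
  | succ k ih =>
    rcases Nat.lt_or_ge i k with h | h
    · have h1 := ih h (by omega)
      have h2 := hgap k (by omega)
      linarith
    · have : i = k := by omega
      subst this; exact hgap i (by omega)

lemma a_le {n : ℕ} {b : ℝ} {a : ℕ → ℝ} (hb : 0 < b)
    (hgap : ∀ i, i < n → a i + 2 * b < a (i + 1)) :
    ∀ i j, i ≤ j → j ≤ n → a i ≤ a j := by
  intro i j hij hjn
  rcases Nat.eq_or_lt_of_le hij with rfl | h
  · exact le_rfl
  · have := a_lt hb hgap i j h hjn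
    linarith

lemma xgap {n : ℕ} {b : ℝ} {x : Fin n → ℝ} (hb : 0 < b)
    (h2b : ∀ i j : Fin n, (j : ℕ) = (i : ℕ) + 1 → x i + 2 * b < x j) :
    ∀ i j : Fin n, (i : ℕ) < (j : ℕ) → x i + 2 * b * (((j : ℕ) - (i : ℕ) : ℕ)) < x j := by
  have key : ∀ d : ℕ, ∀ i j : Fin n, (j : ℕ) = (i : ℕ) + d + 1 →
      x i + 2 * b * (d + 1) < x j := by
    intro d
    induction d with
    | zero =>
      intro i j h
      have := h2b i j (by omega)
      push_cast
      linarith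
    | succ d ih =>
      intro i j h
      have hk : (i : ℕ) + d + 1 < n := by omega
      have h1 := ih i ⟨(i : ℕ) + d + 1, hk⟩ rfl
      have h2 := h2b ⟨(i : ℕ) + d + 1, hk⟩ j (by simp; omega)
      push_cast at h1 ⊢
      linarith
  intro i j hij
  have hd : (j : ℕ) = (i : ℕ) + ((j : ℕ) - (i : ℕ) - 1) + 1 := by omega
  have h1 := key ((j : ℕ) - (i : ℕ) - 1) i j hd
  have hn' : (j : ℕ) - (i : ℕ) = ((j : ℕ) - (i : ℕ) - 1) + 1 := by omega
  rw [hn']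
  push_cast at h1 ⊢
  linarith

lemma xmono {n : ℕ} {b : ℝ} {x : Fin n → ℝ} (hb : 0 < b)
    (h2b : ∀ i j : Fin n, (j : ℕ) = (i : ℕ) + 1 → x i + 2 * b < x j) :
    Monotone x := by
  intro i j hij
  rcases eq_or_lt_of_le hij with rfl | h
  · exact le_refl _
  · have hv : (i : ℕ) < (j : ℕ) := h
    have := xgap hb h2b i j hv
    have : (0 : ℝ) ≤ 2 * b * (((j : ℕ) - (i : ℕ) : ℕ)) := by positivity
    linarith [xgap hb h2b i j hv]

lemma card_filter_val_lt (n k : ℕ) (hk : k ≤ n) :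
    (Finset.univ.filter fun i : Fin n => (i : ℕ) < k).card = k := by
  have h : ∀ m ∈ Finset.range k, m < n := fun m hm => lt_of_lt_of_le (Finset.mem_range.mp hm) hk
  have : (Finset.univ.filter fun i : Fin n => (i : ℕ) < k) = (Finset.range k).attachFin h := by
    ext i
    simp [Finset.mem_attachFin]
  rw [this, Finset.card_attachFin, Finset.card_range]

lemma box_singleton {n : ℕ} {b : ℝ} {x : Fin n → ℝ} (hb : 0 < b)
    (h2b : ∀ i j : Fin n, (j : ℕ) = (i : ℕ) + 1 → x i + 2 * b < x j)
    {D : Finset (Finset (Fin n))} (hD : IsBoxDecomp b x D) :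
    ∀ S ∈ D, ∃ i, S = {i} := by
  obtain ⟨hne, hcov, hint, hsub, hdisj, hord⟩ := hD
  intro S hS
  have hSne := hne S hS
  set lo := S.min' hSne with hlo
  set hi := S.max' hSne with hhi
  rcases eq_or_lt_of_le (S.min'_le _ (S.max'_mem hSne) : lo ≤ hi) with heq | hlt
  · refine ⟨lo, ?_⟩
    apply Finset.eq_singleton_iff_unique_mem.mpr
    exact ⟨S.min'_mem hSne, fun y hy => le_antisymm (le_trans (S.le_max' y hy) heq.ge) (S.min'_le y hy)⟩
  · exfalso
    have hloS := S.min'_mem hSne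
    have hhiS := S.max'_mem hSne
    have hSeq : S = Finset.Icc lo hi := by
      apply Finset.Subset.antisymm
      · intro t ht
        exact Finset.mem_Icc.mpr ⟨S.min'_le t ht, S.le_max' t ht⟩
      · intro t ht
        obtain ⟨h1, h2⟩ := Finset.mem_Icc.mp ht
        exact hint S hS lo hloS hi hhiS t h1 h2
    have hm : S.card = (hi : ℕ) - (lo : ℕ) + 1 := by
      have hlv : (lo : ℕ) < (hi : ℕ) := hlt
      rw [hSeq, Fin.card_Icc]
      omega
    -- left endpoint
    have hsub1 := hsub S hS lo hloS lo hloS le_rfl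
    have hsub2 := hsub S hS hi hhiS hi hhiS le_rfl
    rw [Finset.Icc_self] at hsub1 hsub2
    rw [bbox_singleton] at hsub1 hsub2
    have hmem1 : x lo - b ∈ bbox b x S := hsub1 ⟨le_rfl, by linarith⟩
    have hmem2 : x hi + b ∈ bbox b x S := hsub2 ⟨by linarith, le_rfl⟩
    rw [bbox] at hmem1 hmem2
    have h1 : bmean x S - S.card * b ≤ x lo - b := hmem1.1
    have h2 : x hi + b ≤ bmean x S + S.card * b := hmem2.2
    have hg := xgap hb h2b lo hi hlt
    have hcast : ((S.card : ℝ)) = (((hi : ℕ) - (lo : ℕ) : ℕ) : ℝ) + 1 := by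
      rw [hm]; push_cast; ring
    rw [hcast] at h1 h2
    linarith

lemma singletons_isBoxDecomp {n : ℕ} {b : ℝ} {x : Fin n → ℝ} (hb : 0 < b)
    (h2b : ∀ i j : Fin n, (j : ℕ) = (i : ℕ) + 1 → x i + 2 * b < x j) :
    IsBoxDecomp b x (Finset.univ.image fun i => ({i} : Finset (Fin n))) := by
  have hgap2 : ∀ i j : Fin n, i < j → x i + 2 * b < x j := by
    intro i j hij
    have := xgap hb h2b i j hij
    have hpos : (1 : ℝ) ≤ (((j : ℕ) - (i : ℕ) : ℕ) : ℝ) := by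
      have : 1 ≤ (j : ℕ) - (i : ℕ) := by omega
      exact_mod_cast this
    nlinarith
  refine ⟨?_, ?_, ?_, ?_, ?_, ?_⟩
  · intro S hS
    obtain ⟨i, -, rfl⟩ := Finset.mem_image.mp hS
    exact Finset.singleton_nonempty i
  · intro i
    refine ⟨{i}, ⟨Finset.mem_image_of_mem _ (Finset.mem_univ i), Finset.mem_singleton_self i⟩, ?_⟩
    rintro T ⟨hT, hiT⟩
    obtain ⟨j, -, rfl⟩ := Finset.mem_image.mp hT
    rw [Finset.mem_singleton] at hiT
    rw [hiT]
  · intro S hS p hp c hc t hpt htc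
    obtain ⟨i, -, rfl⟩ := Finset.mem_image.mp hS
    rw [Finset.mem_singleton] at hp hc ⊢
    subst hp; subst hc
    exact le_antisymm htc hpt
  · intro S hS p hp c hc hpc
    obtain ⟨i, -, rfl⟩ := Finset.mem_image.mp hS
    rw [Finset.mem_singleton] at hp hc
    subst hp; subst hc
    rw [Finset.Icc_self]
  · intro S hS T hT hne
    obtain ⟨i, -, rfl⟩ := Finset.mem_image.mp hS
    obtain ⟨j, -, rfl⟩ := Finset.mem_image.mp hT
    have hij : i ≠ j := fun h => hne (by rw [h])
    rw [bbox_singleton, bbox_singleton]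
    ext u
    simp only [Set.mem_inter_iff, Set.mem_Icc, Set.mem_empty_iff_false, iff_false]
    rintro ⟨⟨h1, h2⟩, h3, h4⟩
    rcases lt_or_gt_of_ne hij with h | h
    · have := hgap2 i j h; linarith
    · have := hgap2 j i h; linarith
  · intro S hS T hT hlt u hu v hv
    obtain ⟨i, -, rfl⟩ := Finset.mem_image.mp hS
    obtain ⟨j, -, rfl⟩ := Finset.mem_image.mp hT
    have hij : i < j := hlt i (Finset.mem_singleton_self i) j (Finset.mem_singleton_self j)
    rw [bbox_singleton] at hu hv
    have := hgap2 i j hij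
    have h1 := hu.2
    have h2 := hv.1
    linarith

lemma count_lemma {n : ℕ} {b : ℝ} {a : ℕ → ℝ} (hb : 0 < b)
    (hgap : ∀ i, i < n → a i + 2 * b < a (i + 1)) {x : Fin n → ℝ}
    (hin : ∀ i : Fin n, a i < x i ∧ x i < a ((i : ℕ) + 1)) {k : ℕ} (hk : k ≤ n) :
    (Finset.univ.filter fun i => x i < a k).card = k := by
  have heq : (Finset.univ.filter fun i => x i < a k)
      = Finset.univ.filter fun i : Fin n => (i : ℕ) < k := by
    ext i
    simp only [Finset.mem_filter, Finset.mem_univ, true_and]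
    constructor
    · intro h
      by_contra hle
      push_neg at hle
      have : a k ≤ a i := a_le hb hgap k i hle (le_of_lt i.isLt)
      linarith [(hin i).1]
    · intro h
      have : a ((i : ℕ) + 1) ≤ a k := a_le hb hgap _ k (by omega) hk
      linarith [(hin i).2]
  rw [heq, card_filter_val_lt n k hk]

lemma memU_holds {n : ℕ} {b : ℝ} {a : ℕ → ℝ} (hb : 0 < b)
    (hgap : ∀ i, i < n → a i + 2 * b < a (i + 1)) {x : Fin n → ℝ}
    (h2b : ∀ i j : Fin n, (j : ℕ) = (i : ℕ) + 1 → x i + 2 * b < x j)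
    (hin : ∀ i : Fin n, a i < x i ∧ x i < a ((i : ℕ) + 1)) {k : ℕ} (hk : k ≤ n)
    (havoid : ∀ i : Fin n, a k < x i - b ∨ x i + b < a k) :
    memU b a x k := by
  intro D hD
  refine ⟨?_, count_lemma hb hgap hin hk⟩
  intro S hS hmem
  obtain ⟨i, rfl⟩ := box_singleton hb h2b hD S hS
  rw [bbox_singleton] at hmem
  rcases havoid i with h | h
  · linarith [hmem.1]
  · linarith [hmem.2]

lemma memU_fails {n : ℕ} {b : ℝ} {a : ℕ → ℝ} (hb : 0 < b) {x : Fin n → ℝ}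
    (h2b : ∀ i j : Fin n, (j : ℕ) = (i : ℕ) + 1 → x i + 2 * b < x j)
    {k : ℕ} (i : Fin n) (h1 : x i - b ≤ a k) (h2 : a k ≤ x i + b) :
    ¬ memU b a x k := by
  intro h
  obtain ⟨havoid, -⟩ := h _ (singletons_isBoxDecomp hb h2b)
  exact havoid {i} (Finset.mem_image_of_mem _ (Finset.mem_univ i))
    (by rw [bbox_singleton]; exact ⟨h1, h2⟩)

lemma sep_core {n : ℕ} {b : ℝ} {a : ℕ → ℝ} (hb : 0 < b)
    (hgap : ∀ i, i < n → a i + 2 * b < a (i + 1)) (x : Fin n → ℝ)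
    (hin : ∀ i : Fin n, a i < x i ∧ x i < a ((i : ℕ) + 1))
    (h2b : ∀ i j : Fin n, (j : ℕ) = (i : ℕ) + 1 → x i + 2 * b < x j)
    (p : ℕ) (t : Fin n) (hc1 : x t - b ≤ a p) (hc2 : a p ≤ x t + b)
    (havoid : ∀ k, k ≤ n → k ≠ p → ∀ i : Fin n, a k < x i - b ∨ x i + b < a k) :
    Monotone x ∧ ¬ memU b a x p ∧ ∀ k, k ≤ n → k ≠ p → memU b a x k :=
  ⟨xmono hb h2b, memU_fails hb h2b t hc1 hc2,
    fun k hk hkp => memU_holds hb hgap h2b hin hk (havoid k hk hkp)⟩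

lemma exists_sep (n : ℕ) (b : ℝ) (hb : 0 < b) (a : ℕ → ℝ)
    (hgap : ∀ i, i < n → a i + 2 * b < a (i + 1)) (p : ℕ) (hp : p ≤ n) (hn : 0 < n) :
    ∃ x : Fin n → ℝ, Monotone x ∧ ¬ memU b a x p ∧
      ∀ k, k ≤ n → k ≠ p → memU b a x k := by
  rcases lt_or_eq_of_le hp with hplt | rfl
  · -- p < n : push the point with index p to a p + b
    refine ⟨fun i => if (i : ℕ) = p then a p + b else (a (i : ℕ) + a ((i : ℕ) + 1)) / 2,
      sep_core hb hgap _ ?_ ?_ p ⟨p, hplt⟩ ?_ ?_ ?_⟩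
    · intro i
      by_cases h : (i : ℕ) = p
      · rw [if_pos h, h]
        have := hgap p hplt
        constructor <;> linarith
      · rw [if_neg h]
        have := hgap i i.isLt
        constructor <;> linarith
    · intro i j hj
      by_cases hi : (i : ℕ) = p
      · rw [if_pos hi, if_neg (by omega)]
        have hjp : (j : ℕ) = p + 1 := by omega
        rw [hjp]
        have g1 := hgap p hplt
        have g2 := hgap (p + 1) (by omega)
        linarith
      · by_cases hjp : (j : ℕ) = p
        · rw [if_neg hi, if_pos hjp]
          have hip : (i : ℕ) + 1 = p := by omega
          rw [hip]
          have g1 := hgap (i : ℕ) i.isLt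
          rw [hip] at g1
          linarith
        · rw [if_neg hi, if_neg hjp, hj]
          have g1 := hgap (i : ℕ) (by omega)
          have g2 := hgap ((i : ℕ) + 1) (by omega)
          linarith
    · dsimp only
      rw [if_pos rfl]
      linarith
    · dsimp only
      rw [if_pos rfl]
      linarith
    · intro k hk hkp i
      by_cases hi : (i : ℕ) = p
      · rw [if_pos hi]
        rcases Nat.lt_or_ge k p with h | h
        · left
          have := a_lt hb hgap k p h hp
          linarith
        · right
          have hpk : p < k := by omega
          have := a_lt hb hgap p k hpk hk
          linarith
      · rw [if_neg hi]
        have g := hgap (i : ℕ) i.isLt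
        rcases le_or_gt k (i : ℕ) with h | h
        · left
          have := a_le hb hgap k (i : ℕ) h (le_of_lt i.isLt)
          linarith
        · right
          have := a_le hb hgap ((i : ℕ) + 1) k (by omega) hk
          linarith
  · -- p = n : push the point with index n - 1 to a n - b
    refine ⟨fun i => if (i : ℕ) = p - 1 then a p - b else (a (i : ℕ) + a ((i : ℕ) + 1)) / 2,
      sep_core hb hgap _ ?_ ?_ p ⟨p - 1, by omega⟩ ?_ ?_ ?_⟩
    · intro i
      by_cases h : (i : ℕ) = p - 1
      · rw [if_pos h, h]
        have h1 : p - 1 + 1 = p := by omega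
        rw [h1]
        have := hgap (p - 1) (by omega)
        rw [h1] at this
        constructor <;> linarith
      · rw [if_neg h]
        have := hgap i i.isLt
        constructor <;> linarith
    · intro i j hj
      have hi : ¬ (i : ℕ) = p - 1 := by have := j.isLt; omega
      by_cases hjp : (j : ℕ) = p - 1
      · rw [if_neg hi, if_pos hjp]
        have g1 := hgap (i : ℕ) (by omega)
        have g2 := hgap ((i : ℕ) + 1) (by omega)
        have h2 : (i : ℕ) + 1 + 1 = p := by omega
        rw [h2] at g2
        linarith
      · rw [if_neg hi, if_neg hjp, hj]
        have g1 := hgap (i : ℕ) (by omega)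
        have g2 := hgap ((i : ℕ) + 1) (by have := j.isLt; omega)
        linarith
    · dsimp only
      rw [if_pos rfl]
      linarith
    · dsimp only
      rw [if_pos rfl]
      linarith
    · intro k hk hkp i
      by_cases hi : (i : ℕ) = p - 1
      · rw [if_pos hi]
        left
        have h1 := a_le hb hgap k (p - 1) (by omega) (by omega)
        have h2 := hgap (p - 1) (by omega)
        have h3 : p - 1 + 1 = p := by omega
        rw [h3] at h2
        linarith
      · rw [if_neg hi]
        have g := hgap (i : ℕ) i.isLt
        rcases le_or_gt k (i : ℕ) with h | h
        · left
          have := a_le hb hgap k (i : ℕ) h (le_of_lt i.isLt)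
          linarith
        · right
          have := a_le hb hgap ((i : ℕ) + 1) k (by omega) hk
          linarith


/-- `U_{nL',(m'),nR'} ⊆ U_{nL,(m),nR}` holds if and only if the ordered partition
`n = nL' + m' 1 + ... + nR'` refines `n = nL + m 1 + ... + nR`, i.e. every partial sum of
the latter is a partial sum of the former. -/
theorem part_open_inclusion_iff_refines (n : ℕ) (b : ℝ) (hb : 0 < b) (a : ℕ → ℝ)
    (ha0 : -1 ≤ a 0) (han : a n ≤ 1)
    (hgap : ∀ i, i < n → a i + 2 * b < a (i + 1))
    (nL nR s : ℕ) (m : ℕ → ℕ) (hm : ∀ i, 1 ≤ i → i ≤ s → 1 ≤ m i)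
    (hsum : nL + (∑ i ∈ Finset.range s, m (i + 1)) + nR = n)
    (nL' nR' s' : ℕ) (m' : ℕ → ℕ) (hm' : ∀ i, 1 ≤ i → i ≤ s' → 1 ≤ m' i)
    (hsum' : nL' + (∑ i ∈ Finset.range s', m' (i + 1)) + nR' = n) :
    ((∀ x : Fin n → ℝ, Monotone x →
        memUPart b a x nL' m' s' → memUPart b a x nL m s) ↔
      (∀ j ≤ s, ∃ j' ≤ s',
        nL + ∑ i ∈ Finset.range j, m (i + 1) =
          nL' + ∑ i ∈ Finset.range j', m' (i + 1))) := by
  have hpsle : ∀ j, j ≤ s → nL + ∑ i ∈ Finset.range j, m (i + 1) ≤ n := by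
    intro j hj
    have h1 : ∑ i ∈ Finset.range j, m (i + 1) ≤ ∑ i ∈ Finset.range s, m (i + 1) :=
      Finset.sum_le_sum_of_subset (Finset.range_subset_range.mpr hj)
    omega
  have hpsle' : ∀ j', j' ≤ s' → nL' + ∑ i ∈ Finset.range j', m' (i + 1) ≤ n := by
    intro j hj
    have h1 : ∑ i ∈ Finset.range j, m' (i + 1) ≤ ∑ i ∈ Finset.range s', m' (i + 1) :=
      Finset.sum_le_sum_of_subset (Finset.range_subset_range.mpr hj)
    omega
  constructor
  · intro H j hj
    by_contra hc
    push_neg at hc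
    set p := nL + ∑ i ∈ Finset.range j, m (i + 1) with hpdef
    have hpn : p ≤ n := hpsle j hj
    have hn : 0 < n := by
      rcases Nat.eq_zero_or_pos n with h0 | h
      · exfalso
        apply hc 0 (Nat.zero_le _)
        have : nL' = 0 := by omega
        simp [this]
        omega
      · exact h
    obtain ⟨x, hmon, hnot, hmem⟩ := exists_sep n b hb a hgap p hpn hn
    have hfine : memUPart b a x nL' m' s' := by
      intro j' hj'
      exact hmem _ (hpsle' j' hj') (fun heq => hc j' hj' heq.symm)
    exact hnot (H x hmon hfine j hj)
  · intro href x hx hfine j hj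
    obtain ⟨j', hj', heq⟩ := href j hj
    rw [heq]
    exact hfine j' hj'
end

section
/- The regularized max function M_η(t₁,...,t_p) = ∫_{ℝ^p} max(t₁+h₁,...,t_p+h_p) Π_j θ(h_j/η_j)/η_j dh (where θ ≥ 0 is smooth, supported in [−1,1], with ∫θ = 1 and ∫ h θ(h) dh = 0, and all η_j > 0) satisfies: (a) max(t₁,...,t_p) ≤ M_η(t) ≤ max(t₁+η₁,...,t_p+η_p); (b) M_η(t₁+a,...,t_p+a) = M_η(t₁,...,t_p) + a for all a ∈ ℝ; (c) M_η is nondecreasing in each variable and convex on ℝ^p; (d) if t_j + η_j ≤ max_{k≠j}(t_k − η_k), then M_η(t₁,...,t_p) = M_{η with j-th entry removed}(t with j-th entry removed). -/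
open MeasureTheory

/-- Demailly's regularized maximum: the convolution of the coordinatewise maximum with a
product mollifier with widths `η j`. -/
noncomputable def Mreg (θ : ℝ → ℝ) {p : ℕ} (η t : Fin (p + 1) → ℝ) : ℝ :=
  ∫ h : Fin (p + 1) → ℝ,
    (Finset.univ.sup' Finset.univ_nonempty fun j => t j + h j) *
      ∏ j, θ (h j / η j) / η j

section Aux

variable {θ : ℝ → ℝ}

lemma theta_scaled_zero (hs : ∀ h, θ h ≠ 0 → h ∈ Set.Icc (-1 : ℝ) 1) {η : ℝ} (hη : 0 < η)
    {x : ℝ} (hx : x ∉ Set.Icc (-η) η) : θ (x / η) = 0 := by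
  by_contra h
  obtain ⟨h1, h2⟩ := hs _ h
  have h1' : -1 * η ≤ x := (le_div_iff₀ hη).mp h1
  have h2' : x ≤ η := (div_le_one hη).mp h2
  exact hx ⟨by linarith, h2'⟩

lemma oneDim_integrable (hc : Continuous θ) (hs : ∀ h, θ h ≠ 0 → h ∈ Set.Icc (-1 : ℝ) 1)
    {η : ℝ} (hη : 0 < η) (g : ℝ → ℝ) (hg : Continuous g) :
    Integrable (fun x => g x * (θ (x / η) / η)) := by
  apply Continuous.integrable_of_hasCompactSupport
  · exact hg.mul ((hc.comp (continuous_id.div_const η)).div_const η)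
  · apply HasCompactSupport.intro (isCompact_Icc (a := -η) (b := η))
    intro x hx
    rw [theta_scaled_zero hs hη hx]
    simp

lemma dens_integral (hi : (∫ h : ℝ, θ h) = 1) {η : ℝ} (hη : 0 < η) :
    (∫ x : ℝ, θ (x / η) / η) = 1 := by
  rw [integral_div, Measure.integral_comp_div θ η, hi, abs_of_pos hη]
  field_simp
  simp

lemma mom_integral (hm : (∫ h : ℝ, h * θ h) = 0) {η : ℝ} (hη : 0 < η) :
    (∫ x : ℝ, x * (θ (x / η) / η)) = 0 := by
  have : (fun x : ℝ => x * (θ (x / η) / η)) = fun x => (fun u => u * θ u) (x / η) := by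
    funext x
    show x * (θ (x / η) / η) = x / η * θ (x / η)
    field_simp
  rw [this, Measure.integral_comp_div (fun u => u * θ u) η, hm]
  simp

variable {n : ℕ} {η : Fin n → ℝ}

lemma rho_cont (hc : Continuous θ) :
    Continuous fun h : Fin n → ℝ => ∏ j, θ (h j / η j) / η j :=
  continuous_finset_prod _ fun j _ =>
    (hc.comp ((continuous_apply j).div_const _)).div_const _

lemma rho_nonneg (hnn : ∀ h, 0 ≤ θ h) (hη : ∀ j, 0 < η j) (h : Fin n → ℝ) :
    0 ≤ ∏ j, θ (h j / η j) / η j :=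
  Finset.prod_nonneg fun j _ => div_nonneg (hnn _) (hη j).le

lemma mem_of_rho_ne (hs : ∀ h, θ h ≠ 0 → h ∈ Set.Icc (-1 : ℝ) 1) (hη : ∀ j, 0 < η j)
    {h : Fin n → ℝ} (hρ : (∏ j, θ (h j / η j) / η j) ≠ 0) (k : Fin n) :
    -η k ≤ h k ∧ h k ≤ η k := by
  have hk : θ (h k / η k) / η k ≠ 0 := Finset.prod_ne_zero_iff.mp hρ k (Finset.mem_univ k)
  have hk' : θ (h k / η k) ≠ 0 := fun e => hk (by simp [e])
  obtain ⟨h1, h2⟩ := hs _ hk'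
  have h1' : -1 * η k ≤ h k := (le_div_iff₀ (hη k)).mp h1
  exact ⟨by linarith, (div_le_one (hη k)).mp h2⟩

lemma main_integrable (hc : Continuous θ) (hs : ∀ h, θ h ≠ 0 → h ∈ Set.Icc (-1 : ℝ) 1)
    (hη : ∀ j, 0 < η j) (g : (Fin n → ℝ) → ℝ) (hg : Continuous g) :
    Integrable (fun h : Fin n → ℝ => g h * ∏ j, θ (h j / η j) / η j) := by
  apply Continuous.integrable_of_hasCompactSupport (hg.mul (rho_cont hc))
  apply HasCompactSupport.intro (isCompact_univ_pi fun j => isCompact_Icc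
    (a := -η j) (b := η j))
  intro h hh
  rw [Set.mem_univ_pi] at hh
  push_neg at hh
  obtain ⟨k, hk⟩ := hh
  have : (∏ j, θ (h j / η j) / η j) = 0 :=
    Finset.prod_eq_zero (Finset.mem_univ k) (by rw [theta_scaled_zero hs (hη k) hk]; simp)
  show g h * ∏ j, θ (h j / η j) / η j = 0
  rw [this, mul_zero]

lemma rho_integral (hi : (∫ h : ℝ, θ h) = 1) (hη : ∀ j, 0 < η j) :
    (∫ h : Fin n → ℝ, ∏ j, θ (h j / η j) / η j) = 1 := by
  rw [integral_fintype_prod_volume_eq_prod (fun j x => θ (x / η j) / η j)]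
  exact Finset.prod_eq_one fun j _ => dens_integral hi (hη j)

lemma moment_integral (hc : Continuous θ) (hs : ∀ h, θ h ≠ 0 → h ∈ Set.Icc (-1 : ℝ) 1)
    (hi : (∫ h : ℝ, θ h) = 1) (hm : (∫ h : ℝ, h * θ h) = 0)
    (hη : ∀ j, 0 < η j) (c : ℝ) (j : Fin n) :
    (∫ h : Fin n → ℝ, (c + h j) * ∏ k, θ (h k / η k) / η k) = c := by
  classical
  set f : Fin n → ℝ → ℝ := fun k x => θ (x / η k) / η k with hf
  set g : Fin n → ℝ → ℝ := Function.update f j (fun x => (c + x) * (θ (x / η j) / η j))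
    with hgdef
  have key : ∀ h : Fin n → ℝ, (c + h j) * ∏ k, θ (h k / η k) / η k = ∏ k, g k (h k) := by
    intro h
    have e1 : (∏ k, θ (h k / η k) / η k) = ∏ k, f k (h k) := rfl
    rw [e1, ← Finset.mul_prod_erase Finset.univ (fun k => g k (h k)) (Finset.mem_univ j),
      ← Finset.mul_prod_erase Finset.univ (fun k => f k (h k)) (Finset.mem_univ j)]
    have h2 : ∀ k ∈ Finset.univ.erase j, g k (h k) = f k (h k) := by
      intro k hk
      rw [hgdef, Function.update_of_ne (Finset.mem_erase.mp hk).1]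
    rw [Finset.prod_congr rfl h2]
    have h1 : g j (h j) = (c + h j) * (θ (h j / η j) / η j) := by
      rw [hgdef, Function.update_self]
    rw [h1]
    have : f j (h j) = θ (h j / η j) / η j := rfl
    rw [this]
    ring
  simp only [key]
  rw [integral_fintype_prod_volume_eq_prod g,
    ← Finset.mul_prod_erase Finset.univ (fun k => ∫ x, g k x) (Finset.mem_univ j)]
  have h2 : ∀ k ∈ Finset.univ.erase j, (∫ x, g k x) = 1 := by
    intro k hk
    rw [hgdef, Function.update_of_ne (Finset.mem_erase.mp hk).1, hf]
    exact dens_integral hi (hη k)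
  rw [Finset.prod_congr rfl h2, Finset.prod_const_one, mul_one]
  have h1 : (∫ x, g j x) = c := by
    rw [hgdef, Function.update_self]
    have : (fun x : ℝ => (c + x) * (θ (x / η j) / η j)) =
        fun x => c * (θ (x / η j) / η j) + x * (θ (x / η j) / η j) := by
      funext x; ring
    have i1 : Integrable (fun x : ℝ => c * (θ (x / η j) / η j)) :=
      oneDim_integrable hc hs (hη j) (fun _ => c) continuous_const
    have i2 : Integrable (fun x : ℝ => x * (θ (x / η j) / η j)) :=
      oneDim_integrable hc hs (hη j) id continuous_id
    rw [this, integral_add i1 i2,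
      integral_const_mul, dens_integral hi (hη j), mom_integral hm (hη j)]
    ring
  rw [h1]

lemma sup'_cont {ι : Type*} {s : Finset ι} (hne : s.Nonempty) (t : ι → ℝ) :
    Continuous fun h : ι → ℝ => s.sup' hne fun j => t j + h j :=
  Continuous.finset_sup'_apply hne fun i _ => continuous_const.add (continuous_apply i)

lemma sup'_add_const {ι : Type*} {s : Finset ι} (hne : s.Nonempty) (f : ι → ℝ) (a : ℝ) :
    (s.sup' hne fun j => f j + a) = s.sup' hne f + a := by
  apply le_antisymm
  · exact Finset.sup'_le _ _ fun b hb => add_le_add_left (Finset.le_sup' f hb) a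
  · rw [← le_sub_iff_add_le]
    exact Finset.sup'_le _ _ fun b hb =>
      le_sub_iff_add_le.mpr (Finset.le_sup' (fun j => f j + a) hb)

end Aux

/-- Properties of the regularized maximum `M_η`:
(a) `max t ≤ M_η t ≤ max (t + η)`;
(b) `M_η (t + a) = M_η t + a`;
(c) `M_η` is nondecreasing and convex;
(d) if `t j + η j ≤ max_{k ≠ j} (t k - η k)`, the `j`-th variable may be dropped. -/
theorem regularized_max_properties (θ : ℝ → ℝ)
    (hθ_smooth : ContDiff ℝ (⊤ : ℕ∞) θ) (hθ_nonneg : ∀ h, 0 ≤ θ h)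
    (hθ_supp : ∀ h, θ h ≠ 0 → h ∈ Set.Icc (-1 : ℝ) 1)
    (hθ_int : (∫ h : ℝ, θ h) = 1) (hθ_mom : (∫ h : ℝ, h * θ h) = 0) :
    (∀ (p : ℕ) (η t : Fin (p + 1) → ℝ), (∀ j, 0 < η j) →
      (Finset.univ.sup' Finset.univ_nonempty t ≤ Mreg θ η t ∧
        Mreg θ η t ≤ Finset.univ.sup' Finset.univ_nonempty fun j => t j + η j) ∧
      (∀ a : ℝ, Mreg θ η (fun j => t j + a) = Mreg θ η t + a)) ∧
    (∀ (p : ℕ) (η : Fin (p + 1) → ℝ), (∀ j, 0 < η j) →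
      (∀ t t' : Fin (p + 1) → ℝ, t ≤ t' → Mreg θ η t ≤ Mreg θ η t') ∧
      ConvexOn ℝ Set.univ (Mreg θ η)) ∧
    (∀ (p : ℕ) (η t : Fin (p + 2) → ℝ), (∀ j, 0 < η j) → ∀ j : Fin (p + 2),
      ∀ hne : (Finset.univ.erase j).Nonempty,
        t j + η j ≤ (Finset.univ.erase j).sup' hne (fun k => t k - η k) →
          Mreg θ η t = Mreg θ (η ∘ j.succAbove) (t ∘ j.succAbove)) := by
  have hc : Continuous θ := hθ_smooth.continuous
  refine ⟨?_, ?_, ?_⟩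
  · -- (a), (b)
    intro p η t hη
    constructor
    · constructor
      · -- lower bound
        apply Finset.sup'_le
        intro j _
        have := moment_integral hc hθ_supp hθ_int hθ_mom hη (t j) j
        rw [Mreg, ← this]
        apply integral_mono
        · exact main_integrable hc hθ_supp hη _
            (continuous_const.add (continuous_apply j))
        · exact main_integrable hc hθ_supp hη _ (sup'_cont _ t)
        · intro h
          exact mul_le_mul_of_nonneg_right
            (Finset.le_sup' (fun k => t k + h k) (Finset.mem_univ j))
            (rho_nonneg hθ_nonneg hη h)
      · -- upper bound
        have key : ∀ h : Fin (p + 1) → ℝ,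
            (Finset.univ.sup' Finset.univ_nonempty fun j => t j + h j) *
              (∏ j, θ (h j / η j) / η j) ≤
            (Finset.univ.sup' Finset.univ_nonempty fun j => t j + η j) *
              (∏ j, θ (h j / η j) / η j) := by
          intro h
          rcases eq_or_ne (∏ j, θ (h j / η j) / η j) 0 with h0 | h0
          · rw [h0, mul_zero, mul_zero]
          · apply mul_le_mul_of_nonneg_right _ (rho_nonneg hθ_nonneg hη h)
            apply Finset.sup'_mono_fun
            intro k _
            exact add_le_add_right (mem_of_rho_ne hθ_supp hη h0 k).2 _
        rw [Mreg]
        calc (∫ h : Fin (p + 1) → ℝ,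
              (Finset.univ.sup' Finset.univ_nonempty fun j => t j + h j) *
                ∏ j, θ (h j / η j) / η j)
            ≤ ∫ h : Fin (p + 1) → ℝ,
              (Finset.univ.sup' Finset.univ_nonempty fun j => t j + η j) *
                ∏ j, θ (h j / η j) / η j := by
              apply integral_mono
              · exact main_integrable hc hθ_supp hη _ (sup'_cont _ t)
              · exact main_integrable hc hθ_supp hη _ continuous_const
              · exact key
          _ = Finset.univ.sup' Finset.univ_nonempty fun j => t j + η j := by
              rw [integral_const_mul, rho_integral hθ_int hη, mul_one]
    · -- (b)
      intro a
      rw [Mreg, Mreg]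
      have key : ∀ h : Fin (p + 1) → ℝ,
          (Finset.univ.sup' Finset.univ_nonempty fun j => t j + a + h j) *
            (∏ j, θ (h j / η j) / η j) =
          (Finset.univ.sup' Finset.univ_nonempty fun j => t j + h j) *
            (∏ j, θ (h j / η j) / η j) + a * ∏ j, θ (h j / η j) / η j := by
        intro h
        have : (Finset.univ.sup' Finset.univ_nonempty fun j => t j + a + h j) =
            (Finset.univ.sup' Finset.univ_nonempty fun j => t j + h j) + a := by
          rw [← sup'_add_const]
          exact Finset.sup'_congr _ rfl fun j _ => by ring
        rw [this]
        ring
      simp only [key]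
      rw [integral_add (main_integrable hc hθ_supp hη _ (sup'_cont _ t))
        (main_integrable hc hθ_supp hη _ continuous_const),
        integral_const_mul, rho_integral hθ_int hη, mul_one]
  · -- (c)
    intro p η hη
    constructor
    · intro t t' htt'
      apply integral_mono
      · exact main_integrable hc hθ_supp hη _ (sup'_cont _ t)
      · exact main_integrable hc hθ_supp hη _ (sup'_cont _ t')
      · intro h
        apply mul_le_mul_of_nonneg_right _ (rho_nonneg hθ_nonneg hη h)
        exact Finset.sup'_mono_fun fun k _ => add_le_add_left (htt' k) _
    · refine ⟨convex_univ, ?_⟩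
      intro x _ y _ a b ha hb hab
      have key : ∀ h : Fin (p + 1) → ℝ,
          (Finset.univ.sup' Finset.univ_nonempty fun j => (a • x + b • y) j + h j) *
            (∏ j, θ (h j / η j) / η j) ≤
          a * ((Finset.univ.sup' Finset.univ_nonempty fun j => x j + h j) *
              ∏ j, θ (h j / η j) / η j) +
            b * ((Finset.univ.sup' Finset.univ_nonempty fun j => y j + h j) *
              ∏ j, θ (h j / η j) / η j) := by
        intro h
        have step : (Finset.univ.sup' Finset.univ_nonempty fun j => (a • x + b • y) j + h j) ≤
            a * (Finset.univ.sup' Finset.univ_nonempty fun j => x j + h j) +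
              b * (Finset.univ.sup' Finset.univ_nonempty fun j => y j + h j) := by
          apply Finset.sup'_le
          intro j _
          have e1 : (a • x + b • y) j + h j = a * (x j + h j) + b * (y j + h j) := by
            simp only [Pi.add_apply, Pi.smul_apply, smul_eq_mul]
            have : h j = (a + b) * h j := by rw [hab, one_mul]
            nlinarith [this]
          rw [e1]
          exact add_le_add
            (mul_le_mul_of_nonneg_left
              (Finset.le_sup' (fun k => x k + h k) (Finset.mem_univ j)) ha)
            (mul_le_mul_of_nonneg_left
              (Finset.le_sup' (fun k => y k + h k) (Finset.mem_univ j)) hb)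
        calc (Finset.univ.sup' Finset.univ_nonempty fun j => (a • x + b • y) j + h j) *
              (∏ j, θ (h j / η j) / η j)
            ≤ (a * (Finset.univ.sup' Finset.univ_nonempty fun j => x j + h j) +
                b * (Finset.univ.sup' Finset.univ_nonempty fun j => y j + h j)) *
              (∏ j, θ (h j / η j) / η j) :=
              mul_le_mul_of_nonneg_right step (rho_nonneg hθ_nonneg hη h)
          _ = _ := by ring
      simp only [smul_eq_mul]
      calc Mreg θ η (a • x + b • y)
          ≤ ∫ h : Fin (p + 1) → ℝ,
            (a * ((Finset.univ.sup' Finset.univ_nonempty fun j => x j + h j) *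
                ∏ j, θ (h j / η j) / η j) +
              b * ((Finset.univ.sup' Finset.univ_nonempty fun j => y j + h j) *
                ∏ j, θ (h j / η j) / η j)) := by
            rw [Mreg]
            apply integral_mono
            · exact main_integrable hc hθ_supp hη _ (sup'_cont _ (a • x + b • y))
            · exact Integrable.add
                ((main_integrable hc hθ_supp hη _ (sup'_cont _ x)).const_mul a)
                ((main_integrable hc hθ_supp hη _ (sup'_cont _ y)).const_mul b)
            · exact key
        _ = a * Mreg θ η x + b * Mreg θ η y := by
            rw [integral_add
              ((main_integrable hc hθ_supp hη _ (sup'_cont _ x)).const_mul a)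
              ((main_integrable hc hθ_supp hη _ (sup'_cont _ y)).const_mul b),
              integral_const_mul, integral_const_mul, Mreg, Mreg]
  · -- (d)
    intro p η t hη j hne hle
    -- step 1: replace the full sup' by the sup' over the erased set
    have step1 : Mreg θ η t = ∫ h : Fin (p + 2) → ℝ,
        ((Finset.univ.erase j).sup' hne fun k => t k + h k) * ∏ k, θ (h k / η k) / η k := by
      rw [Mreg]
      congr 1
      funext h
      rcases eq_or_ne (∏ k, θ (h k / η k) / η k) 0 with h0 | h0
      · rw [h0, mul_zero, mul_zero]
      · congr 1
        apply le_antisymm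
        · apply Finset.sup'_le
          intro k _
          by_cases hk : k = j
          · subst hk
            calc t k + h k ≤ t k + η k := add_le_add_right (mem_of_rho_ne hθ_supp hη h0 k).2 _
              _ ≤ (Finset.univ.erase k).sup' hne fun m => t m - η m := hle
              _ ≤ (Finset.univ.erase k).sup' hne fun m => t m + h m := by
                  apply Finset.sup'_mono_fun
                  intro m _
                  have := (mem_of_rho_ne hθ_supp hη h0 m).1
                  linarith
          · exact Finset.le_sup' (fun m => t m + h m)
              (Finset.mem_erase.mpr ⟨hk, Finset.mem_univ k⟩)
        · exact Finset.sup'_le _ _ fun k _ =>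
            Finset.le_sup' (fun m => t m + h m) (Finset.mem_univ k)
    -- rewrite the erased sup' as a sup' over Fin (p+1)
    have hsup : ∀ h : Fin (p + 2) → ℝ,
        ((Finset.univ.erase j).sup' hne fun k => t k + h k) =
          Finset.univ.sup' Finset.univ_nonempty
            fun m : Fin (p + 1) => t (j.succAbove m) + h (j.succAbove m) := by
      intro h
      apply le_antisymm
      · refine Finset.sup'_le _ _ fun k hk => ?_
        obtain ⟨m, rfl⟩ := Fin.exists_succAbove_eq (Finset.mem_erase.mp hk).1
        exact Finset.le_sup' (fun m => t (j.succAbove m) + h (j.succAbove m))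
          (Finset.mem_univ m)
      · exact Finset.sup'_le _ _ fun m _ => Finset.le_sup' (fun k => t k + h k)
          (Finset.mem_erase.mpr ⟨Fin.succAbove_ne j m, Finset.mem_univ _⟩)
    have hprod : ∀ h : Fin (p + 2) → ℝ,
        (∏ k, θ (h k / η k) / η k) = (θ (h j / η j) / η j) *
          ∏ m : Fin (p + 1),
            θ (h (j.succAbove m) / η (j.succAbove m)) / η (j.succAbove m) :=
      fun h => Fin.prod_univ_succAbove (fun k => θ (h k / η k) / η k) j
    -- step 2: Fubini via the measurable equivalence
    set F : ℝ × (Fin (p + 1) → ℝ) → ℝ := fun z =>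
      (θ (z.1 / η j) / η j) *
        ((Finset.univ.sup' Finset.univ_nonempty fun m => t (j.succAbove m) + z.2 m) *
          ∏ m, θ (z.2 m / η (j.succAbove m)) / η (j.succAbove m)) with hF
    have hcomp : ∀ h : Fin (p + 2) → ℝ,
        ((Finset.univ.erase j).sup' hne fun k => t k + h k) * (∏ k, θ (h k / η k) / η k)
          = F (MeasurableEquiv.piFinSuccAbove (fun _ => ℝ) j h) := by
      intro h
      rw [hsup h, hprod h, hF]
      simp only [MeasurableEquiv.piFinSuccAbove_apply, Fin.insertNthEquiv_symm_apply,
        Fin.removeNth]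
      ring
    rw [step1]
    calc (∫ h : Fin (p + 2) → ℝ,
          ((Finset.univ.erase j).sup' hne fun k => t k + h k) * ∏ k, θ (h k / η k) / η k)
        = ∫ h : Fin (p + 2) → ℝ, F (MeasurableEquiv.piFinSuccAbove (fun _ => ℝ) j h) := by
          congr 1; funext h; exact hcomp h
      _ = ∫ z : ℝ × (Fin (p + 1) → ℝ), F z :=
          (volume_preserving_piFinSuccAbove (fun _ : Fin (p + 2) => ℝ) j).integral_comp' F
      _ = Mreg θ (η ∘ j.succAbove) (t ∘ j.succAbove) := by
          rw [hF, Measure.volume_eq_prod ℝ (Fin (p + 1) → ℝ), integral_prod_mul (fun x : ℝ => θ (x / η j) / η j)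
            (fun y : Fin (p + 1) → ℝ =>
              (Finset.univ.sup' Finset.univ_nonempty fun m => t (j.succAbove m) + y m) *
                ∏ m, θ (y m / η (j.succAbove m)) / η (j.succAbove m)),
            dens_integral hθ_int (hη j), one_mul, Mreg]
          simp only [Function.comp]
end
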